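/- arXiv:2111.02841 — 8 statements merged into one kernel-verified Lean document; each statement's English description precedes it below -/
import Mathlib

section
/- For any POVM 𝒜 = {A_j} on a d-dimensional Hilbert space (each A_j a positive semidefinite operator, all nonzero, summing to the identity), the purity ℘(𝒜) := Σ_j tr(A_j²)/(d·tr A_j) satisfies 1/d ≤ ℘(𝒜) ≤ 1. The lower bound is attained iff every A_j is proportional to the identity, and the upper bound is attained iff every A_j has rank 1. -/
/-!
Write `t = tr A` and `s = tr A²` for a nonzero POVM element `A`, so that its contribution to the
purity is `s / (d t)`. Two trace inequalities bound it:

* `t² / d ≤ s`, because `tr (A - (t/d)·1)² ≥ 0`, with equality iff `A = (t/d)·1`;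
* `s ≤ t²`, because the eigenvalues `λᵢ ≥ 0` satisfy `∑ λᵢ² ≤ (∑ λᵢ)²`, with equality iff exactly
  one `λᵢ` is nonzero, i.e. iff `A` has rank one.

Hence `t / d² ≤ s / (d t) ≤ t / d`, and summing over the POVM, where `∑ t = tr 1 = d`, gives
`1/d ≤ ℘ ≤ 1`; the sums are equal iff every term is.
-/

open scoped ComplexOrder

namespace Finset

variable {ι : Type*} [Fintype ι]

theorem sum_sq_eq_sq_sum_iff_of_nonneg [DecidableEq ι] {f : ι → ℝ} (hf : ∀ i, 0 ≤ f i) :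
    ∑ i, f i ^ 2 = (∑ i, f i) ^ 2 ↔ ∀ i, f i ≠ 0 → ∀ j, f j ≠ 0 → i = j := by
  have hrow : ∀ i, f i ^ 2 ≤ ∑ j, f i * f j := fun i => by
    rw [sq]
    exact single_le_sum (f := fun j => f i * f j) (fun j _ => mul_nonneg (hf i) (hf j))
      (mem_univ i)
  rw [sq (∑ i, f i), sum_mul_sum, sum_eq_sum_iff_of_le fun i _ => hrow i]
  refine forall_congr' fun i => ?_
  rw [← add_sum_erase _ _ (mem_univ i), ← sq, left_eq_add,
    sum_eq_zero_iff_of_nonneg fun j _ => mul_nonneg (hf i) (hf j)]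
  simp only [mem_univ, forall_const, mem_erase, ne_eq, and_true, mul_eq_zero]
  constructor
  · intro h hi j hj
    by_contra hij
    exact (h j (Ne.symm hij)).elim hi hj
  · intro h j hji
    by_contra! hne
    exact hji (h hne.1 j hne.2).symm

theorem sum_div_eq_sum_div_iff_of_le {f g D : ι → ℝ} (hD : ∀ i, 0 < D i)
    (hfg : ∀ i, f i ≤ g i) :
    ∑ i, f i / D i = ∑ i, g i / D i ↔ ∀ i, f i = g i := by
  rw [sum_eq_sum_iff_of_le fun i _ => div_le_div_of_nonneg_right (hfg i) (hD i).le]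
  simp only [mem_univ, forall_const]
  exact forall_congr' fun i => div_left_inj' (hD i).ne'

end Finset

namespace Matrix

variable {n : Type*} [Fintype n] {B : Matrix n n ℂ}

theorem IsHermitian.trace_mul_self_nonneg (hB : B.IsHermitian) : 0 ≤ (B * B).trace := by
  simpa only [hB.eq] using (posSemidef_conjTranspose_mul_self B).trace_nonneg

theorem IsHermitian.re_trace_mul_self_eq_zero_iff (hB : B.IsHermitian) :
    (B * B).trace.re = 0 ↔ B = 0 := by
  have him := (Complex.nonneg_iff.mp hB.trace_mul_self_nonneg).2
  rw [← trace_conjTranspose_mul_self_eq_zero_iff, hB.eq, Complex.ext_iff]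
  simp [← him]

theorem PosSemidef.re_trace_pos (hB : B.PosSemidef) (hB0 : B ≠ 0) : 0 < B.trace.re := by
  have h0 := Complex.nonneg_iff.mp hB.trace_nonneg
  exact h0.1.lt_of_ne fun h => hB0 (hB.trace_eq_zero_iff.mp (Complex.ext h.symm h0.2.symm))

variable [DecidableEq n]

theorem re_trace_sub_mean_smul_one_mul_self (B : Matrix n n ℂ) :
    let M := B - ((B.trace.re / Fintype.card n : ℝ) : ℂ) • 1
    (M * M).trace.re = (B * B).trace.re - B.trace.re ^ 2 / Fintype.card n := by
  set t := B.trace.re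
  set N : ℝ := (Fintype.card n : ℝ)
  have hcross : 2 * (t / N) * t - (t / N) ^ 2 * N = t ^ 2 / N := by
    rcases eq_or_ne N 0 with hN | hN
    · simp [hN]
    · field_simp
      ring
  simp only [Complex.coe_smul, mul_sub, sub_mul, Algebra.smul_mul_assoc, one_mul,
    Algebra.mul_smul_comm, mul_one, trace_sub, trace_smul, Complex.real_smul, trace_one,
    Complex.sub_re, Complex.re_ofReal_mul, Complex.natCast_re]
  linear_combination -hcross

theorem IsHermitian.sub_mean_smul_one (hB : B.IsHermitian) :
    (B - ((B.trace.re / Fintype.card n : ℝ) : ℂ) • 1).IsHermitian :=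
  hB.sub (isHermitian_one.smul (Complex.conj_ofReal _))

theorem IsHermitian.sq_re_trace_div_card_le (hB : B.IsHermitian) :
    B.trace.re ^ 2 / Fintype.card n ≤ (B * B).trace.re := by
  have h := (Complex.nonneg_iff.mp hB.sub_mean_smul_one.trace_mul_self_nonneg).1
  rw [re_trace_sub_mean_smul_one_mul_self] at h
  linarith

theorem IsHermitian.re_trace_mul_self_eq_iff_exists_eq_smul_one (hB : B.IsHermitian) :
    (B * B).trace.re = B.trace.re ^ 2 / Fintype.card n ↔ ∃ c : ℂ, B = c • 1 := by
  constructor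
  · intro h
    refine ⟨_, sub_eq_zero.mp (hB.sub_mean_smul_one.re_trace_mul_self_eq_zero_iff.mp ?_)⟩
    rw [re_trace_sub_mean_smul_one_mul_self, h, sub_self]
  · rintro ⟨c, rfl⟩
    rcases isEmpty_or_nonempty n with _ | ⟨⟨i⟩⟩
    · simp
    · have hc : ((c.re : ℝ) : ℂ) = c := by simpa using hB.coe_re_apply_self i
      have hN : (Fintype.card n : ℝ) ≠ 0 :=
        Nat.cast_ne_zero.mpr (Fintype.card_pos_iff.mpr ⟨i⟩).ne'
      rw [← hc]
      simp only [Complex.coe_smul, Algebra.mul_smul_comm, mul_one, trace_smul, trace_one,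
        Complex.real_smul, Complex.mul_re, Complex.ofReal_re, Complex.natCast_re, Complex.ofReal_im,
        Complex.natCast_im, mul_zero, zero_mul, sub_zero]
      field_simp

theorem IsHermitian.re_trace_eq_sum_eigenvalues (hB : B.IsHermitian) :
    B.trace.re = ∑ i, hB.eigenvalues i := by
  simp [hB.trace_eq_sum_eigenvalues]

theorem IsHermitian.trace_mul_self_eq_sum_sq_eigenvalues (hB : B.IsHermitian) :
    (B * B).trace = ∑ i, (hB.eigenvalues i : ℂ) ^ 2 := by
  conv_lhs => rw [hB.spectral_theorem, ← map_mul, Unitary.conjStarAlgAut_apply]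
  rw [trace_mul_cycle, Unitary.coe_star_mul_self, one_mul, diagonal_mul_diagonal,
    trace_diagonal]
  simp [sq]

theorem IsHermitian.re_trace_mul_self_eq_sum_sq_eigenvalues (hB : B.IsHermitian) :
    (B * B).trace.re = ∑ i, hB.eigenvalues i ^ 2 := by
  simp [hB.trace_mul_self_eq_sum_sq_eigenvalues, ← Complex.ofReal_pow]

theorem PosSemidef.re_trace_mul_self_le_sq (hB : B.PosSemidef) :
    (B * B).trace.re ≤ B.trace.re ^ 2 := by
  rw [hB.1.re_trace_eq_sum_eigenvalues, hB.1.re_trace_mul_self_eq_sum_sq_eigenvalues]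
  exact Finset.sum_sq_le_sq_sum_of_nonneg fun i _ => hB.eigenvalues_nonneg i

theorem PosSemidef.re_trace_mul_self_eq_sq_iff_rank_eq_one (hB : B.PosSemidef) (hB0 : B ≠ 0) :
    (B * B).trace.re = B.trace.re ^ 2 ↔ B.rank = 1 := by
  obtain ⟨i, hi⟩ := Function.ne_iff.mp (mt hB.1.eigenvalues_eq_zero_iff.mp hB0)
  have hcard : 1 ≤ Fintype.card {i // hB.1.eigenvalues i ≠ 0} :=
    Fintype.card_pos_iff.mpr ⟨⟨i, hi⟩⟩
  rw [hB.1.re_trace_eq_sum_eigenvalues, hB.1.re_trace_mul_self_eq_sum_sq_eigenvalues,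
    Finset.sum_sq_eq_sq_sum_iff_of_nonneg hB.eigenvalues_nonneg,
    hB.1.rank_eq_card_non_zero_eigs, ← hcard.ge_iff_eq', Fintype.card_le_one_iff]
  simp only [Subtype.forall, Subtype.mk.injEq]

end Matrix

open Matrix Finset

/-- purity bounds for a POVM. -/
theorem stmt_0 (d m : ℕ) (hd : 1 ≤ d) (A : Fin m → Matrix (Fin d) (Fin d) ℂ)
    (hpos : ∀ j, (A j).PosSemidef) (hnz : ∀ j, A j ≠ 0)
    (hsum : ∑ j, A j = 1) :
    (1 / (d : ℝ) ≤ ∑ j, (A j * A j).trace.re / (d * (A j).trace.re)) ∧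
    (∑ j, (A j * A j).trace.re / (d * (A j).trace.re) ≤ 1) ∧
    ((∑ j, (A j * A j).trace.re / (d * (A j).trace.re) = 1 / (d : ℝ)) ↔
      ∀ j, ∃ c : ℂ, A j = c • (1 : Matrix (Fin d) (Fin d) ℂ)) ∧
    ((∑ j, (A j * A j).trace.re / (d * (A j).trace.re) = 1) ↔
      ∀ j, (A j).rank = 1) := by
  have hd0 : (0 : ℝ) < d := by exact_mod_cast hd
  have hT : ∀ j, 0 < (A j).trace.re := fun j => (hpos j).re_trace_pos (hnz j)
  have hD : ∀ j, 0 < (d : ℝ) * (A j).trace.re := fun j => mul_pos hd0 (hT j)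
  have hsumT : ∑ j, (A j).trace.re = d := by
    rw [← Complex.re_sum, ← trace_sum, hsum, trace_one, Fintype.card_fin, Complex.natCast_re]
  have hlow : ∀ j, (A j).trace.re ^ 2 / d ≤ (A j * A j).trace.re := fun j => by
    simpa using (hpos j).1.sq_re_trace_div_card_le
  have hup : ∀ j, (A j * A j).trace.re ≤ (A j).trace.re ^ 2 := fun j =>
    (hpos j).re_trace_mul_self_le_sq
  have hterm : ∀ j, (A j).trace.re ^ 2 / (d * (A j).trace.re) = (A j).trace.re / d :=
    fun j => by field_simp [(hT j).ne']
  have hlow_sum : ∑ j, (A j).trace.re ^ 2 / d / (d * (A j).trace.re) = 1 / d := by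
    simp_rw [div_right_comm _ (d : ℝ), hterm, ← sum_div, hsumT]
    field_simp
  have hup_sum : ∑ j, (A j).trace.re ^ 2 / (d * (A j).trace.re) = 1 := by
    simp_rw [hterm, ← sum_div, hsumT, div_self hd0.ne']
  refine ⟨hlow_sum ▸ sum_le_sum fun j _ => div_le_div_of_nonneg_right (hlow j) (hD j).le,
    hup_sum ▸ sum_le_sum fun j _ => div_le_div_of_nonneg_right (hup j) (hD j).le, ?_, ?_⟩
  · rw [← hlow_sum, eq_comm, sum_div_eq_sum_div_iff_of_le hD hlow]
    refine forall_congr' fun j => eq_comm.trans ?_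
    simpa using (hpos j).1.re_trace_mul_self_eq_iff_exists_eq_smul_one
  · rw [← hup_sum, sum_div_eq_sum_div_iff_of_le hD hup]
    exact forall_congr' fun j => (hpos j).re_trace_mul_self_eq_sq_iff_rank_eq_one (hnz j)
end

section
/- Suppose 𝒜 = {A_j} is a coarse graining of 𝒝 = {B_k}, i.e., A_j = Σ_k Λ_{jk} B_k for a stochastic matrix Λ with Λ_{jk} ≥ 0 and Σ_j Λ_{jk} = 1 for all k. Then the purity satisfies ℘(𝒜) ≤ ℘(𝒝). -/
open scoped ComplexOrder

/-!
For Hermitian `X`, `tr (X * X)` is the squared Frobenius norm `‖X‖²`, so up to the factor `1 / d`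
each summand of the purity is the perspective `‖X‖² / tr X` of the squared norm. The perspective
is jointly convex and positively homogeneous: by the triangle inequality and Cauchy–Schwarz,
`‖∑ₖ λₖ Bₖ‖² / ∑ₖ λₖ tr Bₖ ≤ ∑ₖ λₖ ‖Bₖ‖² / tr Bₖ`. Summing this over `j` and using
`∑ⱼ Λⱼₖ = 1` gives the claim.
-/

open Finset

theorem norm_sum_smul_sq_div_le {ι 𝕜 E : Type*} [RCLike 𝕜] [SeminormedAddCommGroup E]
    [NormedSpace 𝕜 E] (s : Finset ι) {w t : ι → ℝ} (v : ι → E) (hw : ∀ i ∈ s, 0 ≤ w i)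
    (ht : ∀ i ∈ s, 0 < t i) :
    ‖∑ i ∈ s, (w i : 𝕜) • v i‖ ^ 2 / ∑ i ∈ s, w i * t i ≤ ∑ i ∈ s, w i * (‖v i‖ ^ 2 / t i) := by
  have hwt : 0 ≤ ∑ i ∈ s, w i * t i := sum_nonneg fun i hi => mul_nonneg (hw i hi) (ht i hi).le
  have hwvt : ∀ i ∈ s, 0 ≤ w i * (‖v i‖ ^ 2 / t i) := fun i hi =>
    mul_nonneg (hw i hi) (div_nonneg (sq_nonneg _) (ht i hi).le)
  have htri : ‖∑ i ∈ s, (w i : 𝕜) • v i‖ ≤ ∑ i ∈ s, w i * ‖v i‖ :=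
    norm_sum_le_of_le s fun i hi => by
      rw [norm_smul, RCLike.norm_ofReal, abs_of_nonneg (hw i hi)]
  have hcs : (∑ i ∈ s, w i * ‖v i‖) ^ 2 ≤
      (∑ i ∈ s, w i * (‖v i‖ ^ 2 / t i)) * ∑ i ∈ s, w i * t i :=
    sum_sq_le_sum_mul_sum_of_sq_le_mul s hwvt (fun i hi => mul_nonneg (hw i hi) (ht i hi).le)
      fun i hi => le_of_eq <| by field_simp [(ht i hi).ne']
  calc ‖∑ i ∈ s, (w i : 𝕜) • v i‖ ^ 2 / ∑ i ∈ s, w i * t i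
      ≤ (∑ i ∈ s, w i * ‖v i‖) ^ 2 / ∑ i ∈ s, w i * t i := by gcongr
    _ ≤ ∑ i ∈ s, w i * (‖v i‖ ^ 2 / t i) := div_le_of_le_mul₀ hwt (sum_nonneg hwvt) hcs

namespace Matrix

variable {𝕜 m n : Type*} [RCLike 𝕜] [Fintype m] [Fintype n]

attribute [local instance] frobeniusNormedAddCommGroup frobeniusNormedSpace

theorem frobenius_norm_sq_eq_re_trace_mul_conjTranspose (A : Matrix m n 𝕜) :
    ‖A‖ ^ 2 = RCLike.re (A * Aᴴ).trace := by
  change ‖WithLp.toLp 2 fun i => WithLp.toLp 2 (A i)‖ ^ 2 = _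
  simp [PiLp.norm_sq_eq_of_L2, trace, mul_apply, RCLike.mul_conj]

theorem IsHermitian.re_trace_mul_self {A : Matrix n n 𝕜} (hA : A.IsHermitian) :
    RCLike.re (A * A).trace = ‖A‖ ^ 2 := by
  rw [frobenius_norm_sq_eq_re_trace_mul_conjTranspose, hA.eq]

theorem PosSemidef.re_trace_pos_s1 {A : Matrix n n 𝕜} (hA : A.PosSemidef) (h0 : A ≠ 0) :
    0 < RCLike.re A.trace :=
  (RCLike.pos_iff.1 (hA.trace_nonneg.lt_of_ne' (mt hA.trace_eq_zero_iff.1 h0))).1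

theorem re_trace_sum_smul {ι : Type*} (s : Finset ι) (w : ι → ℝ) (B : ι → Matrix n n 𝕜) :
    RCLike.re (∑ i ∈ s, (w i : 𝕜) • B i).trace = ∑ i ∈ s, w i * RCLike.re (B i).trace := by
  simp [trace_sum, trace_smul, RCLike.smul_re]

theorem re_trace_mul_self_div_re_trace_sum_smul_le {ι : Type*} (s : Finset ι) {w : ι → ℝ}
    {B : ι → Matrix n n 𝕜} (hw : ∀ i ∈ s, 0 ≤ w i) (hB : ∀ i ∈ s, (B i).PosSemidef)
    (hB0 : ∀ i ∈ s, B i ≠ 0) :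
    RCLike.re ((∑ i ∈ s, (w i : 𝕜) • B i) * ∑ i ∈ s, (w i : 𝕜) • B i).trace /
        RCLike.re (∑ i ∈ s, (w i : 𝕜) • B i).trace ≤
      ∑ i ∈ s, w i * (RCLike.re (B i * B i).trace / RCLike.re (B i).trace) := by
  have hherm : (∑ i ∈ s, (w i : 𝕜) • B i).IsHermitian :=
    isSelfAdjoint_sum s fun i hi => (hB i hi).isHermitian.smul (RCLike.conj_ofReal (w i))
  calc _ = ‖∑ i ∈ s, (w i : 𝕜) • B i‖ ^ 2 / ∑ i ∈ s, w i * RCLike.re (B i).trace := by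
        rw [hherm.re_trace_mul_self, re_trace_sum_smul]
    _ ≤ ∑ i ∈ s, w i * (‖B i‖ ^ 2 / RCLike.re (B i).trace) :=
        norm_sum_smul_sq_div_le s B hw fun i hi => (hB i hi).re_trace_pos_s1 (hB0 i hi)
    _ = _ := sum_congr rfl fun i hi => by rw [(hB i hi).isHermitian.re_trace_mul_self]

end Matrix

theorem stmt_1_general (d m n : ℕ)
    (A : Fin m → Matrix (Fin d) (Fin d) ℂ) (B : Fin n → Matrix (Fin d) (Fin d) ℂ)
    (Λ : Fin m → Fin n → ℝ)
    (hBpos : ∀ k, (B k).PosSemidef) (hBnz : ∀ k, B k ≠ 0)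
    (hΛnn : ∀ j k, 0 ≤ Λ j k) (hΛcol : ∀ k, ∑ j, Λ j k = 1)
    (hcg : ∀ j, A j = ∑ k, (Λ j k : ℂ) • B k) :
    ∑ j, (A j * A j).trace.re / (d * (A j).trace.re) ≤
      ∑ k, (B k * B k).trace.re / (d * (B k).trace.re) := by
  simp_rw [div_mul_eq_div_div_swap, ← sum_div]
  gcongr
  calc ∑ j, (A j * A j).trace.re / (A j).trace.re
      ≤ ∑ j, ∑ k, Λ j k * ((B k * B k).trace.re / (B k).trace.re) :=
        sum_le_sum fun j _ => by
          rw [hcg j]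
          exact Matrix.re_trace_mul_self_div_re_trace_sum_smul_le univ (fun k _ => hΛnn j k)
            (fun k _ => hBpos k) fun k _ => hBnz k
    _ = ∑ k, (B k * B k).trace.re / (B k).trace.re := by
        rw [sum_comm]
        simp [← sum_mul, hΛcol]

/-- purity is monotone under coarse graining. -/
theorem stmt_1 (d m n : ℕ) (hd : 1 ≤ d)
    (A : Fin m → Matrix (Fin d) (Fin d) ℂ) (B : Fin n → Matrix (Fin d) (Fin d) ℂ)
    (Λ : Fin m → Fin n → ℝ)
    (hApos : ∀ j, (A j).PosSemidef) (hAnz : ∀ j, A j ≠ 0) (hAsum : ∑ j, A j = 1)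
    (hBpos : ∀ k, (B k).PosSemidef) (hBnz : ∀ k, B k ≠ 0) (hBsum : ∑ k, B k = 1)
    (hΛnn : ∀ j k, 0 ≤ Λ j k) (hΛcol : ∀ k, ∑ j, Λ j k = 1)
    (hcg : ∀ j, A j = ∑ k, (Λ j k : ℂ) • B k) :
    ∑ j, (A j * A j).trace.re / (d * (A j).trace.re) ≤
      ∑ k, (B k * B k).trace.re / (d * (B k).trace.re) :=
  stmt_1_general d m n A B Λ hBpos hBnz hΛnn hΛcol hcg
end

section
/- Let 𝒮 = {(|ψ_j⟩, w_j)}_{j=1}^m be a 1-design in a d-dimensional Hilbert space (w_j > 0, Σ_j w_j = d, Σ_j w_j |ψ_j⟩⟨ψ_j| = 1). Then Φ_{1/2}(𝒮) = Σ_{j,k} w_j w_k |⟨ψ_j|ψ_k⟩| ≤ 1 + (d−1)√(d+1). -/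
/-!
Put `G_{jk} = |⟨ψ_j|ψ_k⟩| ∈ [0, 1]` and view the weights `w_j w_k` (total mass `d²`) as a
distribution. The 1-design condition gives the second moment `∑ w_j w_k G_{jk}² = d`. Testing
the frame operator of the tensor squares `ψ_j ⊗ ψ_j` against `1 + SWAP` by Cauchy–Schwarz gives
the fourth moment bound `∑ w_j w_k G_{jk}⁴ ≥ 2d / (d + 1)`. Finally `G` lies below a polynomial
`a + b G² - c G⁴` touching it at `G = 1/√(d+1)` and `G = 1`; summing against the weights and
inserting the moments gives exactly `1 + (d - 1)√(d + 1)`.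
-/

open Matrix Finset

lemma two_mul_add_one_sq_mul_le {t y : ℝ} (ht : 0 ≤ t) (hy0 : 0 ≤ y) (hy1 : y ≤ 1) :
    2 * (t + 1) ^ 2 * y ≤ t + 2 + t * (t ^ 2 + 2 * t + 3) * y ^ 2 - t ^ 3 * y ^ 4 := by
  have hfactor : t + 2 + t * (t ^ 2 + 2 * t + 3) * y ^ 2 - t ^ 3 * y ^ 4 - 2 * (t + 1) ^ 2 * y
      = (t * y - 1) ^ 2 * ((1 - y) * (t * y + t + 2)) := by ring
  have : 0 ≤ (t * y - 1) ^ 2 * ((1 - y) * (t * y + t + 2)) :=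
    mul_nonneg (sq_nonneg _) (mul_nonneg (sub_nonneg.2 hy1) (by positivity))
  linarith

theorem sum_mul_le_of_moments {α : Type*} [Fintype α] {p y : α → ℝ} (hp : ∀ i, 0 ≤ p i)
    (hy0 : ∀ i, 0 ≤ y i) (hy1 : ∀ i, y i ≤ 1) {D : ℝ} (hD : 0 ≤ D) (h0 : ∑ i, p i = D ^ 2)
    (h2 : ∑ i, p i * y i ^ 2 = D) (h4 : 2 * D ≤ (D + 1) * ∑ i, p i * y i ^ 4) :
    ∑ i, p i * y i ≤ 1 + (D - 1) * √(D + 1) := by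
  set t := √(D + 1)
  have ht2 : t ^ 2 = D + 1 := Real.sq_sqrt (by linarith)
  have ht0 : 0 ≤ t := Real.sqrt_nonneg _
  have hsum : 2 * (t + 1) ^ 2 * ∑ i, p i * y i
      ≤ (t + 2) * D ^ 2 + t * (t ^ 2 + 2 * t + 3) * D - t ^ 3 * ∑ i, p i * y i ^ 4 := by
    rw [← h0, ← h2, mul_sum, mul_sum, mul_sum, mul_sum, ← sum_add_distrib, ← sum_sub_distrib]
    refine sum_le_sum fun i _ => ?_
    have := mul_le_mul_of_nonneg_left (two_mul_add_one_sq_mul_le ht0 (hy0 i) (hy1 i)) (hp i)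
    linarith
  have hfourth : 2 * D * t ≤ t ^ 3 * ∑ i, p i * y i ^ 4 := by
    rw [show t ^ 3 * ∑ i, p i * y i ^ 4 = (D + 1) * (∑ i, p i * y i ^ 4) * t by
      rw [pow_succ, ht2]; ring]
    exact mul_le_mul_of_nonneg_right h4 ht0
  refine le_of_mul_le_mul_left ?_ (by positivity : 0 < 2 * (t + 1) ^ 2)
  calc 2 * (t + 1) ^ 2 * ∑ i, p i * y i
      ≤ (t + 2) * D ^ 2 + t * (t ^ 2 + 2 * t + 3) * D - 2 * D * t := by linarith
    _ = 2 * (t + 1) ^ 2 * (1 + (D - 1) * t) := by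
      rw [show D = t ^ 2 - 1 by linarith]
      ring

lemma norm_sum_mul_sq_le {α : Type*} (s : Finset α) (f : α → ℂ) (g : α → ℝ) :
    ‖∑ i ∈ s, f i * g i‖ ^ 2 ≤ (∑ i ∈ s, ‖f i‖ ^ 2) * ∑ i ∈ s, g i ^ 2 := by
  calc ‖∑ i ∈ s, f i * g i‖ ^ 2 ≤ (∑ i ∈ s, ‖f i‖ * |g i|) ^ 2 := by
        gcongr
        exact (norm_sum_le _ _).trans_eq (by simp)
    _ ≤ _ := by simpa only [sq_abs] using sum_mul_sq_le_sq_mul_sq s (‖f ·‖) (|g ·|)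

lemma norm_star_dotProduct_le_one {n : Type*} [Fintype n] {x y : n → ℂ}
    (hx : star x ⬝ᵥ x = 1) (hy : star y ⬝ᵥ y = 1) : ‖star x ⬝ᵥ y‖ ≤ 1 := by
  have hnorm : ∀ z : n → ℂ, star z ⬝ᵥ z = 1 → ‖WithLp.toLp 2 z‖ = 1 := fun z hz => by
    have h := norm_sq_eq_re_inner (𝕜 := ℂ) (WithLp.toLp 2 z)
    rw [EuclideanSpace.inner_toLp_toLp, dotProduct_comm, hz, RCLike.one_re] at h
    exact (pow_eq_one_iff_of_nonneg (norm_nonneg _) two_ne_zero).mp h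
  have h := norm_inner_le_norm (𝕜 := ℂ) (WithLp.toLp 2 x) (WithLp.toLp 2 y)
  rwa [EuclideanSpace.inner_toLp_toLp, dotProduct_comm, hnorm x hx, hnorm y hy, one_mul] at h

namespace WeightedFrame

variable {ι n : Type*}

def tensorSq (x : n → ℂ) : n × n → ℂ := fun p => x p.1 * x p.2

lemma tensorSq_swap (x : n → ℂ) (p : n × n) : tensorSq x p.swap = tensorSq x p :=
  mul_comm _ _

lemma star_tensorSq_dotProduct [Fintype n] (x y : n → ℂ) :
    star (tensorSq x) ⬝ᵥ tensorSq y = (star x ⬝ᵥ y) ^ 2 := by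
  simp only [dotProduct, Fintype.sum_prod_type, tensorSq, Pi.star_apply, star_mul', sq,
    sum_mul_sum]
  exact sum_congr rfl fun a _ => sum_congr rfl fun b _ => by ring

/-- The matrix `1 + SWAP` on `ℂⁿ ⊗ ℂⁿ`, twice the projector onto the symmetric subspace. -/
def symmetrizer [DecidableEq n] (x y : n × n) : ℝ :=
  (if x = y then 1 else 0) + if x = y.swap then 1 else 0

lemma sum_symmetrizer_sq [Fintype n] [DecidableEq n] (x : n × n) :
    ∑ y, symmetrizer x y ^ 2 = 2 + if x.1 = x.2 then 2 else 0 := by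
  have hdiag : x.swap = x ↔ x.1 = x.2 := by
    rw [Prod.ext_iff]
    exact ⟨fun h => h.2, fun h => ⟨h.symm, h⟩⟩
  simp only [symmetrizer, add_sq, ite_pow, one_pow, ne_eq, OfNat.ofNat_ne_zero, not_false_eq_true,
    zero_pow, mul_ite, mul_one, mul_zero, ← Prod.swap_eq_iff_eq_swap, sum_add_distrib, sum_ite_eq,
    mem_univ, if_true, hdiag]
  ring

lemma sum_sum_symmetrizer_sq [Fintype n] [DecidableEq n] :
    ∑ x : n × n, ∑ y, symmetrizer x y ^ 2 = 2 * (Fintype.card n : ℝ) * (Fintype.card n + 1) := by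
  rw [sum_congr rfl fun x _ => sum_symmetrizer_sq x]
  simp only [sum_add_distrib, Fintype.sum_prod_type, sum_ite_eq, mem_univ, if_true, sum_const,
    card_univ, nsmul_eq_mul, Fintype.card_prod, Nat.cast_mul]
  ring

variable [Fintype ι] (w : ι → ℝ)

def frameOperator (u : ι → n → ℂ) : Matrix n n ℂ :=
  ∑ j, (w j : ℂ) • vecMulVec (u j) (star (u j))

lemma frameOperator_apply (u : ι → n → ℂ) (x y : n) :
    frameOperator w u x y = ∑ j, (w j : ℂ) * (u j x * star (u j y)) := by
  simp [frameOperator, Matrix.sum_apply, vecMulVec_apply]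

lemma conjTranspose_frameOperator (u : ι → n → ℂ) :
    (frameOperator w u)ᴴ = frameOperator w u := by
  simp [frameOperator, conjTranspose_sum, conjTranspose_smul, conjTranspose_vecMulVec]

variable [Fintype n]

lemma star_dotProduct_frameOperator_mulVec (u : ι → n → ℂ) (x : n → ℂ) :
    star x ⬝ᵥ (frameOperator w u *ᵥ x) = ∑ j, ((w j * ‖star (u j) ⬝ᵥ x‖ ^ 2 : ℝ) : ℂ) := by
  simp only [frameOperator, sum_mulVec, smul_mulVec, vecMulVec_mulVec, dotProduct_sum,
    dotProduct_smul]
  refine sum_congr rfl fun j _ => ?_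
  rw [star_dotProduct x (u j)]
  push_cast
  simp [RCLike.star_def, RCLike.mul_conj, mul_comm]

lemma sum_sum_norm_frameOperator_sq (u : ι → n → ℂ) :
    ∑ x, ∑ y, ‖frameOperator w u x y‖ ^ 2 = ∑ j, ∑ k, w j * w k * ‖star (u j) ⬝ᵥ u k‖ ^ 2 := by
  apply Complex.ofReal_injective
  calc ((∑ x, ∑ y, ‖frameOperator w u x y‖ ^ 2 : ℝ) : ℂ)
        = trace (frameOperator w u * (frameOperator w u)ᴴ) := by
        simp [trace, mul_apply, RCLike.mul_conj]
    _ = ∑ j, (w j : ℂ) * (star (u j) ⬝ᵥ (frameOperator w u *ᵥ u j)) := by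
        rw [conjTranspose_frameOperator]
        nth_rewrite 1 [frameOperator]
        simp only [Finset.sum_mul, trace_sum, smul_mul, trace_smul, vecMulVec_mul,
          trace_vecMulVec, dotProduct_comm (u _), ← dotProduct_mulVec, smul_eq_mul]
    _ = _ := by
        simp only [star_dotProduct_frameOperator_mulVec, mul_sum]
        push_cast
        rw [Finset.sum_comm]
        exact sum_congr rfl fun j _ => sum_congr rfl fun k _ => by ring

lemma sum_sum_mul_norm_sq_of_frameOperator_eq_one [DecidableEq n] (v : ι → n → ℂ)
    (h : frameOperator w v = 1) (hv : ∀ j, star (v j) ⬝ᵥ v j = 1) :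
    ∑ j, ∑ k, w j * w k * ‖star (v j) ⬝ᵥ v k‖ ^ 2 = ∑ j, w j := by
  have hframe : ∀ k, ∑ j, w j * ‖star (v j) ⬝ᵥ v k‖ ^ 2 = 1 := fun k => by
    have hk := star_dotProduct_frameOperator_mulVec w v (v k)
    rw [h, one_mulVec, hv k, ← Complex.ofReal_sum] at hk
    exact_mod_cast hk.symm
  rw [sum_comm]
  refine sum_congr rfl fun k _ => ?_
  calc ∑ j, w j * w k * ‖star (v j) ⬝ᵥ v k‖ ^ 2
        = (∑ j, w j * ‖star (v j) ⬝ᵥ v k‖ ^ 2) * w k := by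
        rw [sum_mul]
        exact sum_congr rfl fun j _ => by ring
    _ = w k := by rw [hframe, one_mul]

lemma sum_sum_frameOperator_tensorSq_mul_symmetrizer [DecidableEq n] (v : ι → n → ℂ) :
    ∑ x, ∑ y, frameOperator w (fun j => tensorSq (v j)) x y * symmetrizer x y
      = 2 * ∑ j, (w j : ℂ) * (star (v j) ⬝ᵥ v j) ^ 2 := by
  set F := frameOperator w (fun j => tensorSq (v j))
  have hF : ∀ x, F x x.swap = F x x := fun x => by
    simp only [F, frameOperator_apply, tensorSq_swap]
  have htrace : ∑ x, F x x = ∑ j, (w j : ℂ) * (star (v j) ⬝ᵥ v j) ^ 2 := by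
    simp only [← star_tensorSq_dotProduct]
    change trace F = _
    simp only [F, frameOperator, trace_sum, trace_smul, trace_vecMulVec, smul_eq_mul,
      dotProduct_comm (tensorSq _)]
  simp only [symmetrizer, Complex.ofReal_add, apply_ite Complex.ofReal, Complex.ofReal_one,
    Complex.ofReal_zero, mul_add, mul_ite, mul_one, mul_zero, ← Prod.swap_eq_iff_eq_swap,
    sum_add_distrib, sum_ite_eq, mem_univ, if_true, hF, htrace]
  ring

theorem two_mul_sq_sum_le_card_mul_sum_sum_norm_pow_four [DecidableEq n] (v : ι → n → ℂ)
    (hv : ∀ j, star (v j) ⬝ᵥ v j = 1) :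
    2 * (∑ j, w j) ^ 2 ≤
      Fintype.card n * (Fintype.card n + 1) * ∑ j, ∑ k, w j * w k * ‖star (v j) ⬝ᵥ v k‖ ^ 4 := by
  have hcs := norm_sum_mul_sq_le univ
    (fun z : (n × n) × (n × n) => frameOperator w (fun j => tensorSq (v j)) z.1 z.2)
    (fun z => symmetrizer z.1 z.2)
  simp only [Fintype.sum_prod_type (α₁ := n × n), sum_sum_frameOperator_tensorSq_mul_symmetrizer,
    sum_sum_norm_frameOperator_sq, sum_sum_symmetrizer_sq, hv, star_tensorSq_dotProduct] at hcs
  simp only [one_pow, mul_one, ← Complex.ofReal_sum, norm_mul, norm_pow, Complex.norm_real,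
    Complex.norm_ofNat, Real.norm_eq_abs, mul_pow, sq_abs, ← pow_mul, Nat.reduceMul] at hcs
  linarith

end WeightedFrame

open WeightedFrame

/-- upper bound `Φ_{1/2}(𝒮) ≤ 1 + (d-1)√(d+1)` for a 1-design. -/
theorem stmt_5 (d m : ℕ) (hd : 1 ≤ d) (v : Fin m → Fin d → ℂ) (w : Fin m → ℝ)
    (hw : ∀ j, 0 < w j) (hwsum : ∑ j, w j = d)
    (hunit : ∀ j, star (v j) ⬝ᵥ v j = 1)
    (hdesign : ∑ j, (w j : ℂ) • Matrix.vecMulVec (v j) (star (v j)) = 1) :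
    ∑ j, ∑ k, w j * w k * ‖star (v j) ⬝ᵥ v k‖ ≤
      1 + ((d : ℝ) - 1) * Real.sqrt ((d : ℝ) + 1) := by
  have hsecond := sum_sum_mul_norm_sq_of_frameOperator_eq_one w v hdesign hunit
  have hfourth := two_mul_sq_sum_le_card_mul_sum_sum_norm_pow_four w v hunit
  rw [hwsum] at hsecond
  rw [hwsum, Fintype.card_fin] at hfourth
  have hd0 : (0 : ℝ) < d := by exact_mod_cast hd
  have hbound := sum_mul_le_of_moments (p := fun z : Fin m × Fin m => w z.1 * w z.2)
    (y := fun z => ‖star (v z.1) ⬝ᵥ v z.2‖) (fun _ => (mul_pos (hw _) (hw _)).le)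
    (fun _ => norm_nonneg _) (fun _ => norm_star_dotProduct_le_one (hunit _) (hunit _))
    hd0.le (by simp only [Fintype.sum_prod_type, ← Fintype.sum_mul_sum, hwsum, sq])
    (by simpa only [Fintype.sum_prod_type] using hsecond)
    (by
      simp only [Fintype.sum_prod_type]
      exact le_of_mul_le_mul_left (by linarith) hd0)
  simpa only [Fintype.sum_prod_type] using hbound
end

section
/- Let 𝒮 = {(|ψ_j⟩, w_j)}_{j=1}^m be a 1-design in a d-dimensional Hilbert space with m states (w_j ≥ 0, Σ_j w_j = d, Σ_j w_j |ψ_j⟩⟨ψ_j| = 1, and all |ψ_j⟩ unit vectors). Then Φ_{1/2}(𝒮) = Σ_{j,k} w_j w_k |⟨ψ_j|ψ_k⟩| ≤ d²/m + (d/m)·√(d(m−1)(m−d)). -/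
/-!
Split `Φ_{1/2}` into its diagonal part `h = ∑ w_j²` and the off-diagonal part. Since the states
are unit vectors and `∑ w_j |ψ_j⟩⟨ψ_j| = 1`, the off-diagonal weights sum to `d² - h` and the
off-diagonal second moment `∑ w_j w_k |⟨ψ_j|ψ_k⟩|²` to `d - h`, so Cauchy–Schwarz bounds
`Φ_{1/2}` by `h + √((d² - h)(d - h))`. This is decreasing in `h`, and `h ≥ d²/m` by
Cauchy–Schwarz again.
-/

open Matrix Finset

theorem sum_mul_norm_dotProduct_sq_eq {ι n : Type*} [Fintype ι] [Fintype n] [DecidableEq n]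
    (v : ι → n → ℂ) (w : ι → ℝ)
    (hdesign : ∑ j, (w j : ℂ) • vecMulVec (v j) (star (v j)) = 1) (x : n → ℂ) :
    ((∑ k, w k * ‖star x ⬝ᵥ v k‖ ^ 2 : ℝ) : ℂ) = star x ⬝ᵥ x := by
  have h := congrArg (fun M => star x ⬝ᵥ (M *ᵥ x)) hdesign
  simp only [sum_mulVec, smul_mulVec, vecMulVec_mulVec, dotProduct_sum, one_mulVec] at h
  rw [← h]
  push_cast
  refine sum_congr rfl fun k _ => ?_
  rw [← Complex.mul_conj', star_dotProduct (v k) x]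
  simp only [dotProduct_smul, MulOpposite.smul_eq_mul_unop, MulOpposite.unop_op, smul_eq_mul,
    Complex.star_def]

section DiagOffDiag

variable {ι : Type*} [Fintype ι] [DecidableEq ι]

theorem sum_sum_eq_sum_diag_add_sum_offDiag {M : Type*} [AddCommMonoid M] (f : ι → ι → M) :
    ∑ j, ∑ k, f j k = ∑ j, f j j + ∑ p ∈ univ.offDiag, f p.1 p.2 := by
  rw [← sum_product' (f := f), ← diag_union_offDiag, sum_union (disjoint_diag_offDiag _), sum_diag]

theorem sum_diag_le_sum_sum {f : ι → ι → ℝ} (hf : ∀ j k, 0 ≤ f j k) :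
    ∑ j, f j j ≤ ∑ j, ∑ k, f j k := by
  rw [sum_sum_eq_sum_diag_add_sum_offDiag]
  exact le_add_of_nonneg_right (sum_nonneg fun p _ => hf p.1 p.2)

theorem sum_sum_mul_le_add_sqrt {w : ι → ℝ} {c : ι → ι → ℝ} (hw : ∀ j, 0 ≤ w j)
    (hc : ∀ j, c j j = 1) :
    ∑ j, ∑ k, w j * w k * c j k ≤
      ∑ j, w j ^ 2 + √(((∑ j, w j) ^ 2 - ∑ j, w j ^ 2) *
        (∑ j, ∑ k, w j * w k * c j k ^ 2 - ∑ j, w j ^ 2)) := by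
  rw [sq, Fintype.sum_mul_sum]
  simp only [sum_sum_eq_sum_diag_add_sum_offDiag (fun j k => w j * w k * c j k),
    sum_sum_eq_sum_diag_add_sum_offDiag (fun j k => w j * w k * c j k ^ 2),
    sum_sum_eq_sum_diag_add_sum_offDiag (fun j k => w j * w k), hc, one_pow, mul_one, ← sq,
    add_sub_cancel_left, add_le_add_iff_left]
  refine Real.le_sqrt_of_sq_le (sum_sq_le_sum_mul_sum_of_sq_le_mul _ ?_ ?_ fun p _ => ?_)
  · exact fun p _ => mul_nonneg (hw _) (hw _)
  · exact fun p _ => mul_nonneg (mul_nonneg (hw _) (hw _)) (sq_nonneg _)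
  · exact le_of_eq (by ring)

end DiagOffDiag

theorem add_sqrt_mul_sub_le_of_le {x y a b : ℝ} (hxy : x ≤ y) (hya : y ≤ a) (hyb : y ≤ b) :
    y + √((a - y) * (b - y)) ≤ x + √((a - x) * (b - x)) := by
  have hs := Real.sqrt_nonneg ((a - y) * (b - y))
  have hs2 := Real.sq_sqrt (mul_nonneg (sub_nonneg.2 hya) (sub_nonneg.2 hyb))
  have hamgm : 2 * √((a - y) * (b - y)) ≤ (a - y) + (b - y) := by
    nlinarith [sq_nonneg (a - b)]
  suffices (y - x) + √((a - y) * (b - y)) ≤ √((a - x) * (b - x)) by linarith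
  rw [Real.le_sqrt (by linarith) (by nlinarith)]
  nlinarith

theorem stmt_6_general (d m : ℕ) (v : Fin m → Fin d → ℂ) (w : Fin m → ℝ)
    (hw : ∀ j, 0 ≤ w j) (hwsum : ∑ j, w j = d)
    (hunit : ∀ j, star (v j) ⬝ᵥ v j = 1)
    (hdesign : ∑ j, (w j : ℂ) • Matrix.vecMulVec (v j) (star (v j)) = 1) :
    ∑ j, ∑ k, w j * w k * ‖star (v j) ⬝ᵥ v k‖ ≤
      (d : ℝ) ^ 2 / m +
        ((d : ℝ) / m) * Real.sqrt ((d : ℝ) * ((m : ℝ) - 1) * ((m : ℝ) - (d : ℝ))) := by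
  obtain rfl | hm := Nat.eq_zero_or_pos m
  · simp -- both sides are `0`, the right one through division by `0`
  have hsecond : ∑ j, ∑ k, w j * w k * ‖star (v j) ⬝ᵥ v k‖ ^ 2 = d := by
    have hrow (j : Fin m) : ∑ k, w k * ‖star (v j) ⬝ᵥ v k‖ ^ 2 = 1 := by
      exact_mod_cast (sum_mul_norm_dotProduct_sq_eq v w hdesign (v j)).trans (hunit j)
    simp only [mul_assoc, ← mul_sum, hrow, mul_one, hwsum]
  have hdiag_le_sq : ∑ j, w j ^ 2 ≤ (d : ℝ) ^ 2 := by
    simpa only [sq, ← hwsum, Fintype.sum_mul_sum] using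
      sum_diag_le_sum_sum fun j k => mul_nonneg (hw j) (hw k)
  have hdiag_le : ∑ j, w j ^ 2 ≤ (d : ℝ) := by
    simpa only [hunit, norm_one, one_pow, mul_one, ← sq, hsecond] using
      sum_diag_le_sum_sum (f := fun j k => w j * w k * ‖star (v j) ⬝ᵥ v k‖ ^ 2)
        fun j k => mul_nonneg (mul_nonneg (hw j) (hw k)) (sq_nonneg _)
  have hdiag_ge : (d : ℝ) ^ 2 / m ≤ ∑ j, w j ^ 2 := by
    rw [div_le_iff₀ (by positivity), ← hwsum, mul_comm]
    simpa using sq_sum_le_card_mul_sum_sq (s := univ) (f := w)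
  have hphi := sum_sum_mul_le_add_sqrt (c := fun j k => ‖star (v j) ⬝ᵥ v k‖) hw (by simp [hunit])
  rw [hwsum, hsecond] at hphi
  refine hphi.trans ((add_sqrt_mul_sub_le_of_le hdiag_ge hdiag_le_sq hdiag_le).trans_eq ?_)
  have hprod : ((d : ℝ) ^ 2 - d ^ 2 / m) * (d - d ^ 2 / m) =
      ((d : ℝ) / m) ^ 2 * (d * (m - 1) * (m - d)) := by
    field_simp
  rw [hprod, Real.sqrt_mul (sq_nonneg _), Real.sqrt_sq (by positivity)]

/-- upper bound for `Φ_{1/2}` of a 1-design with m states. -/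
theorem stmt_6 (d m : ℕ) (hdm : d ≤ m) (v : Fin m → Fin d → ℂ) (w : Fin m → ℝ)
    (hw : ∀ j, 0 ≤ w j) (hwsum : ∑ j, w j = d)
    (hunit : ∀ j, star (v j) ⬝ᵥ v j = 1)
    (hdesign : ∑ j, (w j : ℂ) • Matrix.vecMulVec (v j) (star (v j)) = 1) :
    ∑ j, ∑ k, w j * w k * ‖star (v j) ⬝ᵥ v k‖ ≤
      (d : ℝ) ^ 2 / m +
        ((d : ℝ) / m) * Real.sqrt ((d : ℝ) * ((m : ℝ) - 1) * ((m : ℝ) - (d : ℝ))) :=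
  stmt_6_general d m v w hw hwsum hunit hdesign
end

section
/- Suppose 0 < a² ≤ b ≤ a < 1 and p₁, p₂, x₁, x₂ are real numbers with 0 ≤ x₁ ≤ x₂ ≤ 1, 0 ≤ p₁, p₂ ≤ 1, p₁ + p₂ = 1, p₁x₁ + p₂x₂ = a, and p₁x₁² + p₂x₂² = b. Then a·√(a/b) ≤ p₁√x₁ + p₂√x₂ ≤ ζ(a,b), where ζ(a,b) = (b − a² + (1−a)√((1−a)(a−b)))/(1 − 2a + b). -/
/-!
Write `E` for the weighted sum. The lower bound is the moment inequality
`(E X)³ ≤ (E √X)² · E X²`, the product of the two Cauchy–Schwarz inequalities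
`(E X)² ≤ E √X · E X^{3/2}` and `(E X^{3/2})² ≤ E X · E X²`.

For the upper bound put `r = √((a - b)/(1 - a))`. On `[0, 1]` the polynomial
`(t - r)² (1 - t) (1 + 2r + t)` is nonnegative; with `t = √X` its expectation bounds `E √X` by an
expression in `a = E X` and `b = E X²` alone, which is `ζ(a, b)`. When `b = a` the weights sit on
`{0, 1}`, where `√X = X`.
-/

/-- The function ζ(a,b) from the paper. -/
noncomputable def zeta (a b : ℝ) : ℝ :=
  (b - a ^ 2 + (1 - a) * Real.sqrt ((1 - a) * (a - b))) / (1 - 2 * a + b)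

open Finset Real

theorem zeta_self {a : ℝ} (ha : a < 1) : zeta a a = a := by
  have : 1 - 2 * a + a ≠ 0 := by linarith
  rw [zeta, sub_self, mul_zero, sqrt_zero, mul_zero, add_zero, div_eq_iff this]
  ring

theorem zeta_mul_eq {a b r : ℝ} (ha : a < 1) (hab : a ^ 2 ≤ b) (hr : 0 ≤ r)
    (hrab : r ^ 2 * (1 - a) = a - b) :
    zeta a b * (2 * r * (1 + r) ^ 2) = r ^ 2 * (1 + 2 * r) + (1 + 2 * r + 3 * r ^ 2) * a - b := by
  have hD : 1 - 2 * a + b ≠ 0 := by nlinarith [sq_nonneg (1 - a)]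
  have hsqrt : √((1 - a) * (a - b)) = (1 - a) * r := by
    rw [← hrab, show (1 - a) * (r ^ 2 * (1 - a)) = ((1 - a) * r) ^ 2 by ring,
      sqrt_sq (mul_nonneg (by linarith) hr)]
  rw [zeta, hsqrt, div_mul_eq_mul_div, div_eq_iff hD, show b = a - r ^ 2 * (1 - a) by linarith]
  ring

section WeightedSums

variable {ι : Type*} (s : Finset ι) {p x : ι → ℝ}

theorem sum_mul_pow_three_le_sum_mul_sqrt_sq_mul_sum_mul_sq (hp : ∀ i ∈ s, 0 ≤ p i)
    (hx : ∀ i ∈ s, 0 ≤ x i) :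
    (∑ i ∈ s, p i * x i) ^ 3 ≤
      (∑ i ∈ s, p i * √(x i)) ^ 2 * ∑ i ∈ s, p i * x i ^ 2 := by
  set a := ∑ i ∈ s, p i * x i
  set A := ∑ i ∈ s, p i * √(x i)
  set M := ∑ i ∈ s, p i * (x i * √(x i))
  set b := ∑ i ∈ s, p i * x i ^ 2
  have hsq : ∀ i ∈ s, x i = √(x i) * √(x i) := fun i hi => (mul_self_sqrt (hx i hi)).symm
  have ha : 0 ≤ a := sum_nonneg fun i hi => mul_nonneg (hp i hi) (hx i hi)
  have haAM : a ^ 2 ≤ A * M := sum_sq_le_sum_mul_sum_of_sq_le_mul s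
    (fun i hi => mul_nonneg (hp i hi) (sqrt_nonneg _))
    (fun i hi => mul_nonneg (hp i hi) (mul_nonneg (hx i hi) (sqrt_nonneg _)))
    (fun i hi => le_of_eq <| by linear_combination (p i ^ 2 * x i) * hsq i hi)
  have hMab : M ^ 2 ≤ a * b := sum_sq_le_sum_mul_sum_of_sq_le_mul s
    (fun i hi => mul_nonneg (hp i hi) (hx i hi))
    (fun i hi => mul_nonneg (hp i hi) (sq_nonneg _))
    (fun i hi => le_of_eq <| by linear_combination (p i * x i) ^ 2 * (hsq i hi).symm)
  have : a * a ^ 3 ≤ a * (A ^ 2 * b) :=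
    calc a * a ^ 3 = (a ^ 2) ^ 2 := by ring
      _ ≤ (A * M) ^ 2 := pow_le_pow_left₀ (sq_nonneg a) haAM 2
      _ = A ^ 2 * M ^ 2 := by ring
      _ ≤ A ^ 2 * (a * b) := mul_le_mul_of_nonneg_left hMab (sq_nonneg A)
      _ = a * (A ^ 2 * b) := by ring
  rcases ha.eq_or_lt with h0 | hpos
  · have hb : 0 ≤ b := sum_nonneg fun i hi => mul_nonneg (hp i hi) (sq_nonneg _)
    rw [← h0, zero_pow three_ne_zero]
    positivity
  · exact le_of_mul_le_mul_left this hpos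

theorem mul_sqrt_div_le_sum_mul_sqrt (hp : ∀ i ∈ s, 0 ≤ p i) (hx : ∀ i ∈ s, 0 ≤ x i) {a b : ℝ}
    (ha : ∑ i ∈ s, p i * x i = a) (hb : ∑ i ∈ s, p i * x i ^ 2 = b) :
    a * √(a / b) ≤ ∑ i ∈ s, p i * √(x i) := by
  have ha0 : 0 ≤ a := ha ▸ sum_nonneg fun i hi => mul_nonneg (hp i hi) (hx i hi)
  have hb0 : 0 ≤ b := hb ▸ sum_nonneg fun i hi => mul_nonneg (hp i hi) (sq_nonneg _)
  have hA0 : 0 ≤ ∑ i ∈ s, p i * √(x i) :=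
    sum_nonneg fun i hi => mul_nonneg (hp i hi) (sqrt_nonneg _)
  have hcube := sum_mul_pow_three_le_sum_mul_sqrt_sq_mul_sum_mul_sq s hp hx
  rw [ha, hb] at hcube
  refine (pow_le_pow_iff_left₀ (by positivity) hA0 two_ne_zero).mp ?_
  calc (a * √(a / b)) ^ 2 = a ^ 3 / b := by
        rw [mul_pow, sq_sqrt (by positivity)]; ring
    _ ≤ _ := div_le_of_le_mul₀ hb0 (sq_nonneg _) hcube

-- The quartic touches the line at √y = r and at y = 1: the extremal law sits on {r², 1}.
theorem two_mul_mul_one_add_sq_mul_sqrt_le {r y : ℝ} (hr : 0 ≤ r) (hy0 : 0 ≤ y) (hy1 : y ≤ 1) :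
    2 * r * (1 + r) ^ 2 * √y ≤ r ^ 2 * (1 + 2 * r) + (1 + 2 * r + 3 * r ^ 2) * y - y ^ 2 := by
  set t := √y
  have ht1 : t ≤ 1 := sqrt_le_one.mpr hy1
  have hy : y = t ^ 2 := (sq_sqrt hy0).symm
  have key : 0 ≤ (t - r) ^ 2 * (1 - t) * (1 + 2 * r + t) := by
    have ht0 : 0 ≤ t := sqrt_nonneg y
    apply mul_nonneg (mul_nonneg (sq_nonneg _) _) <;> linarith
  rw [hy]
  linarith

theorem two_mul_mul_one_add_sq_mul_sum_mul_sqrt_le (hp : ∀ i ∈ s, 0 ≤ p i)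
    (hp1 : ∑ i ∈ s, p i = 1)
    (hx0 : ∀ i ∈ s, 0 ≤ x i) (hx1 : ∀ i ∈ s, x i ≤ 1) {r : ℝ} (hr : 0 ≤ r) :
    2 * r * (1 + r) ^ 2 * ∑ i ∈ s, p i * √(x i) ≤
      r ^ 2 * (1 + 2 * r) + (1 + 2 * r + 3 * r ^ 2) * ∑ i ∈ s, p i * x i -
        ∑ i ∈ s, p i * x i ^ 2 :=
  calc 2 * r * (1 + r) ^ 2 * ∑ i ∈ s, p i * √(x i)
      = ∑ i ∈ s, p i * (2 * r * (1 + r) ^ 2 * √(x i)) := by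
        rw [mul_sum]; exact sum_congr rfl fun i _ => by ring
    _ ≤ ∑ i ∈ s, p i * (r ^ 2 * (1 + 2 * r) + (1 + 2 * r + 3 * r ^ 2) * x i - x i ^ 2) :=
        sum_le_sum fun i hi => mul_le_mul_of_nonneg_left
          (two_mul_mul_one_add_sq_mul_sqrt_le hr (hx0 i hi) (hx1 i hi)) (hp i hi)
    _ = r ^ 2 * (1 + 2 * r) * ∑ i ∈ s, p i + (1 + 2 * r + 3 * r ^ 2) * ∑ i ∈ s, p i * x i -
          ∑ i ∈ s, p i * x i ^ 2 := by
        rw [mul_sum, mul_sum, ← sum_add_distrib, ← sum_sub_distrib]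
        exact sum_congr rfl fun i _ => by ring
    _ = _ := by rw [hp1, mul_one]

theorem sum_mul_sqrt_eq_of_sum_mul_sq_eq (hp : ∀ i ∈ s, 0 ≤ p i) (hx0 : ∀ i ∈ s, 0 ≤ x i)
    (hx1 : ∀ i ∈ s, x i ≤ 1) (h : ∑ i ∈ s, p i * x i ^ 2 = ∑ i ∈ s, p i * x i) :
    ∑ i ∈ s, p i * √(x i) = ∑ i ∈ s, p i * x i := by
  have hterm : ∀ i ∈ s, p i * (x i - x i ^ 2) = 0 := by
    refine (sum_eq_zero_iff_of_nonneg fun i hi => ?_).mp ?_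
    · exact mul_nonneg (hp i hi) (by nlinarith [hx0 i hi, hx1 i hi])
    · simp only [mul_sub, sum_sub_distrib, h, sub_self]
  refine sum_congr rfl fun i hi => ?_
  rcases mul_eq_zero.mp (hterm i hi) with hpi | hxi
  · rw [hpi, zero_mul, zero_mul]
  · rw [(sqrt_eq_iff_mul_self_eq (hx0 i hi) (hx0 i hi)).mpr (by linear_combination hxi)]

theorem sum_mul_sqrt_le_zeta (hp : ∀ i ∈ s, 0 ≤ p i) (hp1 : ∑ i ∈ s, p i = 1)
    (hx0 : ∀ i ∈ s, 0 ≤ x i) (hx1 : ∀ i ∈ s, x i ≤ 1) {a b : ℝ}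
    (ha : ∑ i ∈ s, p i * x i = a) (hb : ∑ i ∈ s, p i * x i ^ 2 = b)
    (ha1 : a < 1) (hab : a ^ 2 ≤ b) (hba : b ≤ a) :
    ∑ i ∈ s, p i * √(x i) ≤ zeta a b := by
  rcases hba.eq_or_lt with rfl | hlt
  · rw [zeta_self ha1, sum_mul_sqrt_eq_of_sum_mul_sq_eq s hp hx0 hx1 (hb.trans ha.symm), ha]
  have h1a : 0 < 1 - a := by linarith
  set r := √((a - b) / (1 - a))
  have hr : 0 < r := sqrt_pos.mpr (div_pos (by linarith) h1a)
  have hrab : r ^ 2 * (1 - a) = a - b := by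
    rw [sq_sqrt (div_pos (by linarith) h1a).le, div_mul_cancel₀ _ h1a.ne']
  have hbound := two_mul_mul_one_add_sq_mul_sum_mul_sqrt_le s hp hp1 hx0 hx1 hr.le
  rw [ha, hb, ← zeta_mul_eq ha1 hab hr.le hrab, mul_comm] at hbound
  exact le_of_mul_le_mul_right hbound (by positivity)

end WeightedSums

theorem stmt_9_general (a b p₁ p₂ x₁ x₂ : ℝ)
    (hab : a ^ 2 ≤ b) (hba : b ≤ a) (ha1 : a < 1)
    (hx1 : 0 ≤ x₁) (hx12 : x₁ ≤ x₂) (hx2 : x₂ ≤ 1)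
    (hp1 : 0 ≤ p₁) (hp2 : 0 ≤ p₂)
    (hsum : p₁ + p₂ = 1) (hmean : p₁ * x₁ + p₂ * x₂ = a)
    (hsec : p₁ * x₁ ^ 2 + p₂ * x₂ ^ 2 = b) :
    a * Real.sqrt (a / b) ≤ p₁ * Real.sqrt x₁ + p₂ * Real.sqrt x₂ ∧
      p₁ * Real.sqrt x₁ + p₂ * Real.sqrt x₂ ≤ zeta a b := by
  set p : Fin 2 → ℝ := ![p₁, p₂]
  set x : Fin 2 → ℝ := ![x₁, x₂]
  have hp : ∀ i ∈ univ, 0 ≤ p i := by simp [p, Fin.forall_fin_two, hp1, hp2]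
  have hx_nonneg : ∀ i ∈ univ, 0 ≤ x i := by simp [x, Fin.forall_fin_two, hx1, hx1.trans hx12]
  have hx_le_one : ∀ i ∈ univ, x i ≤ 1 := by simp [x, Fin.forall_fin_two, hx2, hx12.trans hx2]
  have hp_sum : ∑ i, p i = 1 := by simp [p, hsum]
  have hx_mean : ∑ i, p i * x i = a := by simp [p, x, hmean]
  have hx_sec : ∑ i, p i * x i ^ 2 = b := by simp [p, x, hsec]
  have hsqrt_mean : ∑ i, p i * √(x i) = p₁ * √x₁ + p₂ * √x₂ := by simp [p, x]
  rw [← hsqrt_mean]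
  exact ⟨mul_sqrt_div_le_sum_mul_sqrt univ hp hx_nonneg hx_mean hx_sec,
    sum_mul_sqrt_le_zeta univ hp hp_sum hx_nonneg hx_le_one hx_mean hx_sec ha1 hab hba⟩

/-- two-point half-moment bounds. -/
theorem stmt_9 (a b p₁ p₂ x₁ x₂ : ℝ)
    (ha2 : 0 < a ^ 2) (hab : a ^ 2 ≤ b) (hba : b ≤ a) (ha1 : a < 1)
    (hx1 : 0 ≤ x₁) (hx12 : x₁ ≤ x₂) (hx2 : x₂ ≤ 1)
    (hp1 : 0 ≤ p₁) (hp1' : p₁ ≤ 1) (hp2 : 0 ≤ p₂) (hp2' : p₂ ≤ 1)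
    (hsum : p₁ + p₂ = 1) (hmean : p₁ * x₁ + p₂ * x₂ = a)
    (hsec : p₁ * x₁ ^ 2 + p₂ * x₂ ^ 2 = b) :
    a * Real.sqrt (a / b) ≤ p₁ * Real.sqrt x₁ + p₂ * Real.sqrt x₂ ∧
      p₁ * Real.sqrt x₁ + p₂ * Real.sqrt x₂ ≤ zeta a b :=
  stmt_9_general a b p₁ p₂ x₁ x₂ hab hba ha1 hx1 hx12 hx2 hp1 hp2 hsum hmean hsec
end

section
/- Let 𝒜 = {A_j} be a POVM on a d-dimensional Hilbert space. Define the one-copy estimation fidelity F(𝒜) = 1/(d+1) + (1/(d(d+1)))·Σ_j ‖A_j‖, where ‖·‖ is the operator norm. Then 1/d ≤ F(𝒜) ≤ 2/(d+1); the lower bound is attained iff every A_j is proportional to the identity, and the upper bound is attained iff every A_j has rank 1. -/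
open scoped ComplexOrder Matrix.Norms.L2Operator

/-- One-copy estimation fidelity of a POVM (‖·‖ is the ℓ²-operator norm). -/
noncomputable def oneCopyFid (d m : ℕ) (A : Fin m → Matrix (Fin d) (Fin d) ℂ) : ℝ :=
  1 / ((d : ℝ) + 1) + (1 / ((d : ℝ) * ((d : ℝ) + 1))) * ∑ j, ‖A j‖

/-!
Diagonalising a positive semidefinite `A`, its operator norm is its largest eigenvalue and its
trace the sum of its nonnegative eigenvalues. Hence `tr A ≤ d ‖A‖` with equality iff all
eigenvalues coincide, and `‖A‖ ≤ tr A` with equality iff at most one eigenvalue is nonzero.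
Summing over a POVM, where `∑ tr A_j = d`, gives `1 ≤ ∑ ‖A_j‖ ≤ d` with the same equality
cases, and the fidelity is an increasing affine function of `∑ ‖A_j‖`.
-/

open Matrix Finset

section SupNorm

variable {n : Type*} [Fintype n]

lemma le_pi_norm (f : n → ℝ) (i : n) : f i ≤ ‖f‖ :=
  (le_abs_self _).trans (norm_le_pi_norm f i)

lemma sum_le_card_mul_pi_norm (f : n → ℝ) : ∑ i, f i ≤ Fintype.card n * ‖f‖ := by
  simpa using sum_le_sum fun i (_ : i ∈ univ) => le_pi_norm f i

lemma sum_eq_card_mul_pi_norm_iff (f : n → ℝ) :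
    ∑ i, f i = Fintype.card n * ‖f‖ ↔ ∀ i, f i = ‖f‖ := by
  have h := sum_eq_sum_iff_of_le fun i (_ : i ∈ univ) => le_pi_norm f i
  simp_all

lemma exists_eq_pi_norm_of_nonneg [Nonempty n] {f : n → ℝ} (hf : 0 ≤ f) :
    ∃ i, f i = ‖f‖ ∧ ∀ k, f k ≤ f i := by
  obtain ⟨i, hi⟩ := Finite.exists_max f
  refine ⟨i, le_antisymm (le_pi_norm f i) ?_, hi⟩
  refine (pi_norm_le_iff_of_nonneg (hf i)).mpr fun k => ?_
  rw [Real.norm_of_nonneg (hf k)]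
  exact hi k

lemma pi_norm_le_sum_of_nonneg {f : n → ℝ} (hf : 0 ≤ f) : ‖f‖ ≤ ∑ i, f i :=
  (pi_norm_le_iff_of_nonneg (sum_nonneg fun i _ => hf i)).mpr fun i => by
    rw [Real.norm_of_nonneg (hf i)]
    exact single_le_sum (fun k _ => hf k) (mem_univ i)

lemma pi_norm_eq_sum_iff_of_nonneg {f : n → ℝ} (hf : 0 ≤ f) :
    ‖f‖ = ∑ i, f i ↔ Fintype.card {i // f i ≠ 0} ≤ 1 := by
  classical
  cases isEmpty_or_nonempty n
  · simp [Fintype.card_eq_zero, Subsingleton.elim f 0]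
  obtain ⟨i₀, hi₀, hmax⟩ := exists_eq_pi_norm_of_nonneg hf
  rw [← hi₀, ← add_sum_erase _ _ (mem_univ i₀), left_eq_add,
    sum_eq_zero_iff_of_nonneg fun i _ => hf i, Fintype.card_le_one_iff]
  have eq_of_ne_zero (h : ∀ i ∈ univ.erase i₀, f i = 0) {i} (hi : f i ≠ 0) : i = i₀ := by
    by_contra hne
    exact hi (h i (mem_erase.mpr ⟨hne, mem_univ i⟩))
  refine ⟨fun h a b => Subtype.ext ((eq_of_ne_zero h a.2).trans (eq_of_ne_zero h b.2).symm),
    fun h i hi => ?_⟩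
  by_contra hfi
  have hfi₀ : f i₀ ≠ 0 := ((lt_of_le_of_ne (hf i) (Ne.symm hfi)).trans_le (hmax i)).ne'
  exact (mem_erase.mp hi).1 (congrArg Subtype.val (h ⟨i, hfi⟩ ⟨i₀, hfi₀⟩))

end SupNorm

section Spectral

variable {𝕜 : Type*} [RCLike 𝕜] {n : Type*} [Fintype n] [DecidableEq n] {A : Matrix n n 𝕜}

lemma Matrix.IsHermitian.l2_opNorm_eq (hA : A.IsHermitian) : ‖A‖ = ‖hA.eigenvalues‖ := by
  conv_lhs => rw [hA.spectral_theorem]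
  rw [Unitary.conjStarAlgAut_apply, mul_assoc, CStarRing.norm_coe_unitary_mul, ← Unitary.coe_star,
    CStarRing.norm_mul_coe_unitary, l2_opNorm_diagonal]
  simp [Pi.norm_def]

lemma Matrix.IsHermitian.re_trace_eq_sum_eigenvalues_s12 (hA : A.IsHermitian) :
    RCLike.re A.trace = ∑ i, hA.eigenvalues i := by
  simp [hA.trace_eq_sum_eigenvalues]

lemma Matrix.IsHermitian.re_trace_le_card_mul_l2_opNorm (hA : A.IsHermitian) :
    RCLike.re A.trace ≤ Fintype.card n * ‖A‖ := by
  rw [hA.re_trace_eq_sum_eigenvalues_s12, hA.l2_opNorm_eq]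
  exact sum_le_card_mul_pi_norm _

lemma Matrix.PosSemidef.re_trace_eq_card_mul_l2_opNorm_iff (hA : A.PosSemidef) :
    RCLike.re A.trace = Fintype.card n * ‖A‖ ↔ ∃ c : 𝕜, A = c • 1 := by
  constructor
  · intro h
    rw [hA.1.re_trace_eq_sum_eigenvalues_s12, hA.1.l2_opNorm_eq, sum_eq_card_mul_pi_norm_iff] at h
    refine ⟨(‖hA.1.eigenvalues‖ : 𝕜), ?_⟩
    conv_lhs => rw [hA.1.spectral_theorem]
    simp only [Function.comp_def, h, ← smul_one_eq_diagonal, map_smul, map_one]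
  · rintro ⟨c, rfl⟩
    cases isEmpty_or_nonempty n
    · simp [Subsingleton.elim (c • 1 : Matrix n n 𝕜) 0]
    obtain ⟨r, hr, rfl⟩ : ∃ r ≥ (0 : ℝ), (r : 𝕜) = c :=
      RCLike.nonneg_iff_exists_ofReal.mp (by simpa using hA.diag_nonneg (i := Classical.arbitrary n))
    rw [smul_one_eq_diagonal, trace_diagonal, l2_opNorm_diagonal, pi_norm_const]
    simp [abs_of_nonneg hr, mul_comm]

lemma Matrix.PosSemidef.l2_opNorm_le_re_trace (hA : A.PosSemidef) : ‖A‖ ≤ RCLike.re A.trace := by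
  rw [hA.1.re_trace_eq_sum_eigenvalues_s12, hA.1.l2_opNorm_eq]
  exact pi_norm_le_sum_of_nonneg hA.eigenvalues_nonneg

lemma Matrix.PosSemidef.l2_opNorm_eq_re_trace_iff (hA : A.PosSemidef) :
    ‖A‖ = RCLike.re A.trace ↔ A.rank ≤ 1 := by
  rw [hA.1.re_trace_eq_sum_eigenvalues_s12, hA.1.l2_opNorm_eq, hA.1.rank_eq_card_non_zero_eigs]
  exact pi_norm_eq_sum_iff_of_nonneg hA.eigenvalues_nonneg

end Spectral

lemma Matrix.rank_eq_zero_iff {R : Type*} [Field R] {m n : Type*} [Fintype m] [Fintype n]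
    {A : Matrix m n R} : A.rank = 0 ↔ A = 0 := by
  classical
  rw [Matrix.rank, Submodule.finrank_eq_zero, LinearMap.range_eq_bot, ← Matrix.toLin'_apply',
    LinearEquiv.map_eq_zero_iff]

section POVM

variable {𝕜 : Type*} [RCLike 𝕜] {n : Type*} [Fintype n] [DecidableEq n] {ι : Type*} [Fintype ι]
  {A : ι → Matrix n n 𝕜}

lemma sum_re_trace_eq_card (hsum : ∑ j, A j = 1) :
    ∑ j, RCLike.re (A j).trace = Fintype.card n := by
  rw [← map_sum, ← trace_sum, hsum, trace_one]
  simp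

lemma sum_l2_opNorm_le_card (hpos : ∀ j, (A j).PosSemidef) (hsum : ∑ j, A j = 1) :
    ∑ j, ‖A j‖ ≤ Fintype.card n :=
  sum_re_trace_eq_card hsum ▸ sum_le_sum fun j _ => (hpos j).l2_opNorm_le_re_trace

lemma sum_l2_opNorm_eq_card_iff (hpos : ∀ j, (A j).PosSemidef) (hsum : ∑ j, A j = 1) :
    ∑ j, ‖A j‖ = Fintype.card n ↔ ∀ j, (A j).rank ≤ 1 := by
  rw [← sum_re_trace_eq_card hsum,
    sum_eq_sum_iff_of_le fun j _ => (hpos j).l2_opNorm_le_re_trace]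
  simp [(hpos _).l2_opNorm_eq_re_trace_iff]

lemma card_le_card_mul_sum_l2_opNorm (hA : ∀ j, (A j).IsHermitian) (hsum : ∑ j, A j = 1) :
    (Fintype.card n : ℝ) ≤ Fintype.card n * ∑ j, ‖A j‖ :=
  calc (Fintype.card n : ℝ) = ∑ j, RCLike.re (A j).trace := (sum_re_trace_eq_card hsum).symm
    _ ≤ ∑ j, Fintype.card n * ‖A j‖ :=
      sum_le_sum fun j _ => (hA j).re_trace_le_card_mul_l2_opNorm
    _ = Fintype.card n * ∑ j, ‖A j‖ := (mul_sum ..).symm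

lemma one_le_sum_l2_opNorm [Nonempty n] (hA : ∀ j, (A j).IsHermitian) (hsum : ∑ j, A j = 1) :
    1 ≤ ∑ j, ‖A j‖ :=
  le_of_mul_le_mul_left (by simpa using card_le_card_mul_sum_l2_opNorm hA hsum)
    (by exact_mod_cast Fintype.card_pos)

lemma sum_l2_opNorm_eq_one_iff [Nonempty n] (hpos : ∀ j, (A j).PosSemidef)
    (hsum : ∑ j, A j = 1) : ∑ j, ‖A j‖ = 1 ↔ ∀ j, ∃ c : 𝕜, A j = c • 1 := by
  have hcard : (Fintype.card n : ℝ) ≠ 0 := by exact_mod_cast Fintype.card_ne_zero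
  rw [← (mul_right_injective₀ hcard).eq_iff, mul_one, mul_sum]
  nth_rw 2 [← sum_re_trace_eq_card hsum]
  rw [eq_comm, sum_eq_sum_iff_of_le fun j _ => (hpos j).1.re_trace_le_card_mul_l2_opNorm]
  simp [(hpos _).re_trace_eq_card_mul_l2_opNorm_iff]

end POVM

lemma oneCopyFid_eq_inv_add {d m : ℕ} (hd : d ≠ 0) (A : Fin m → Matrix (Fin d) (Fin d) ℂ) :
    oneCopyFid d m A = 1 / d + (∑ j, ‖A j‖ - 1) / (d * (d + 1)) := by
  unfold oneCopyFid
  field_simp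
  ring

lemma oneCopyFid_eq_sub {d m : ℕ} (hd : d ≠ 0) (A : Fin m → Matrix (Fin d) (Fin d) ℂ) :
    oneCopyFid d m A = 2 / (d + 1) - (d - ∑ j, ‖A j‖) / (d * (d + 1)) := by
  unfold oneCopyFid
  field_simp
  ring

/-- bounds on the one-copy estimation fidelity, with the
trivial-POVM and rank-1 equality conditions. -/
theorem stmt_12 (d m : ℕ) (hd : 1 ≤ d) (A : Fin m → Matrix (Fin d) (Fin d) ℂ)
    (hpos : ∀ j, (A j).PosSemidef) (hnz : ∀ j, A j ≠ 0)
    (hsum : ∑ j, A j = 1) :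
    (1 / (d : ℝ) ≤ oneCopyFid d m A) ∧
    (oneCopyFid d m A ≤ 2 / ((d : ℝ) + 1)) ∧
    (oneCopyFid d m A = 1 / (d : ℝ) ↔
      ∀ j, ∃ c : ℂ, A j = c • (1 : Matrix (Fin d) (Fin d) ℂ)) ∧
    (oneCopyFid d m A = 2 / ((d : ℝ) + 1) ↔ ∀ j, (A j).rank = 1) := by
  have : Nonempty (Fin d) := Fin.pos_iff_nonempty.mp hd
  have hd₀ : d ≠ 0 := Nat.one_le_iff_ne_zero.mp hd
  have hden : (0 : ℝ) < d * (d + 1) := by positivity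
  have hlower := one_le_sum_l2_opNorm (fun j => (hpos j).1) hsum
  have hupper := sum_l2_opNorm_le_card hpos hsum
  have hupper_iff := sum_l2_opNorm_eq_card_iff hpos hsum
  rw [Fintype.card_fin] at hupper hupper_iff
  have hrank : ∀ j, (A j).rank ≤ 1 ↔ (A j).rank = 1 := fun j => by
    have := mt Matrix.rank_eq_zero_iff.mp (hnz j)
    omega
  refine ⟨?_, ?_, ?_, ?_⟩
  · rw [oneCopyFid_eq_inv_add hd₀]
    exact le_add_of_nonneg_right (div_nonneg (by linarith) hden.le)
  · rw [oneCopyFid_eq_sub hd₀]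
    exact sub_le_self _ (div_nonneg (by linarith) hden.le)
  · rw [oneCopyFid_eq_inv_add hd₀, add_eq_left, div_eq_zero_iff, or_iff_left hden.ne', sub_eq_zero,
      sum_l2_opNorm_eq_one_iff hpos hsum]
  · rw [oneCopyFid_eq_sub hd₀, sub_eq_self, div_eq_zero_iff, or_iff_left hden.ne', sub_eq_zero,
      eq_comm, hupper_iff]
    exact forall_congr' hrank
end

section
/- Let |ψ⟩ and |φ⟩ be unit vectors in a finite-dimensional Hilbert space, with rank-1 projectors A = |ψ⟩⟨ψ| and B = |φ⟩⟨φ|, and let Q(A⊗B) = 1 + tr(AB) + A + B + AB + BA (numbers denoting multiples of the identity). Then ‖Q(A⊗B)‖ = 2(1 + |⟨ψ|φ⟩|² + |⟨ψ|φ⟩|). -/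
open Matrix WithLp RCLike InnerProductSpace
open scoped Matrix.Norms.L2Operator InnerProductSpace

/-! With `P = A + B`, the relations `A² = A`, `B² = B`, `tr A = tr B = 1` and
`tr (A B) = |⟨ψ|φ⟩|² = r²` give `Q(A⊗B) = (1 + r²) + P²`. Writing `w = P z`,
`‖w‖² ≤ (1 + r) (|⟨ψ|z⟩|² + |⟨φ|z⟩|²) = (1 + r) re ⟨w|z⟩ ≤ (1 + r) ‖w‖ ‖z‖`, so `‖P‖ ≤ 1 + r`,
and `1 + r` is an eigenvalue of `P`, with eigenvector `r ψ + ⟨φ|ψ⟩ φ` (or `ψ` when `r = 0`).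
Hence `‖Q(A⊗B)‖ = 1 + r² + (1 + r)²`. -/

theorem ContinuousLinearMap.norm_smul_one_add_mul_self_eq {𝕜 E : Type*} [RCLike 𝕜]
    [NormedAddCommGroup E] [NormedSpace 𝕜 E] {T : E →L[𝕜] E} {c μ : ℝ} (hc : 0 ≤ c)
    (hT : ‖T‖ ≤ μ) {z : E} (hz : z ≠ 0) (hTz : T z = (μ : 𝕜) • z) :
    ‖(c : 𝕜) • 1 + T * T‖ = c + μ ^ 2 := by
  have hμ : 0 ≤ μ := (norm_nonneg T).trans hT
  apply le_antisymm
  · calc ‖(c : 𝕜) • 1 + T * T‖ ≤ c * ‖(1 : E →L[𝕜] E)‖ + ‖T‖ * ‖T‖ := by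
          grw [norm_add_le, norm_smul, norm_mul_le, norm_ofReal, abs_of_nonneg hc]
      _ ≤ c * 1 + μ * μ := by gcongr; exact norm_id_le
      _ = c + μ ^ 2 := by ring
  · have hQz : ((c : 𝕜) • 1 + T * T) z = ((c + μ ^ 2 : ℝ) : 𝕜) • z := by
      rw [_root_.add_apply, _root_.smul_apply, one_apply_eq_self, mul_apply_eq_comp, hTz, map_smul,
        hTz, smul_smul, ← add_smul]
      congr 1; push_cast; ring
    have := ((c : 𝕜) • 1 + T * T).le_opNorm z
    rw [hQz, norm_smul, norm_ofReal, abs_of_nonneg (by positivity)] at this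
    exact le_of_mul_le_mul_right this (norm_pos_iff.mpr hz)

section RankOnePair

variable {𝕜 E : Type*} [RCLike 𝕜] [NormedAddCommGroup E] [InnerProductSpace 𝕜 E] {x y : E}

theorem norm_smul_add_smul_sq_le (hx : ‖x‖ = 1) (hy : ‖y‖ = 1) (a b : 𝕜) :
    ‖a • x + b • y‖ ^ 2 ≤ (1 + ‖⟪x, y⟫_𝕜‖) * (‖a‖ ^ 2 + ‖b‖ ^ 2) := by
  have hcross : re ⟪a • x, b • y⟫_𝕜 ≤ ‖a‖ * ‖b‖ * ‖⟪x, y⟫_𝕜‖ :=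
    calc re ⟪a • x, b • y⟫_𝕜 ≤ ‖⟪a • x, b • y⟫_𝕜‖ := re_le_norm _
      _ = ‖a‖ * ‖b‖ * ‖⟪x, y⟫_𝕜‖ := by
        rw [inner_smul_left, inner_smul_right, norm_mul, norm_mul, norm_conj, mul_assoc]
  rw [norm_add_sq (𝕜 := 𝕜), norm_smul, norm_smul, hx, hy]
  nlinarith [two_mul_le_add_sq ‖a‖ ‖b‖, norm_nonneg ⟪x, y⟫_𝕜]

theorem inner_rankOne_self_apply_self (x z : E) :
    ⟪rankOne 𝕜 x x z, z⟫_𝕜 = (‖⟪x, z⟫_𝕜‖ ^ 2 : ℝ) := by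
  rw [inner_left_rankOne_apply, ← inner_conj_symm, RCLike.conj_mul, ofReal_pow]

theorem norm_rankOne_add_rankOne_apply_le (hx : ‖x‖ = 1) (hy : ‖y‖ = 1) (z : E) :
    ‖(rankOne 𝕜 x x + rankOne 𝕜 y y) z‖ ≤ (1 + ‖⟪x, y⟫_𝕜‖) * ‖z‖ := by
  set w := (rankOne 𝕜 x x + rankOne 𝕜 y y) z
  set s := ‖⟪x, z⟫_𝕜‖ ^ 2 + ‖⟪y, z⟫_𝕜‖ ^ 2
  have hws : s ≤ ‖w‖ * ‖z‖ := by
    have : re ⟪w, z⟫_𝕜 = s := by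
      simp only [w, _root_.add_apply, inner_add_left, inner_rankOne_self_apply_self, map_add,
        ofReal_re, s]
    exact this ▸ re_inner_le_norm w z
  have hw : ‖w‖ ^ 2 ≤ (1 + ‖⟪x, y⟫_𝕜‖) * s := norm_smul_add_smul_sq_le hx hy _ _
  rcases (norm_nonneg w).eq_or_lt with h0 | hpos
  · rw [← h0]; positivity
  · refine le_of_mul_le_mul_left ?_ hpos
    nlinarith [norm_nonneg ⟪x, y⟫_𝕜]

theorem norm_rankOne_add_rankOne_le (hx : ‖x‖ = 1) (hy : ‖y‖ = 1) :
    ‖rankOne 𝕜 x x + rankOne 𝕜 y y‖ ≤ 1 + ‖⟪x, y⟫_𝕜‖ :=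
  ContinuousLinearMap.opNorm_le_bound _ (by positivity) (norm_rankOne_add_rankOne_apply_le hx hy)

theorem exists_rankOne_add_rankOne_apply_eq_smul (hx : ‖x‖ = 1) (hy : ‖y‖ = 1) :
    ∃ z ≠ 0, (rankOne 𝕜 x x + rankOne 𝕜 y y) z = ((1 + ‖⟪x, y⟫_𝕜‖ : ℝ) : 𝕜) • z := by
  have hxx : ⟪x, x⟫_𝕜 = 1 := by rw [inner_self_eq_norm_sq_to_K, hx]; simp
  have hyy : ⟪y, y⟫_𝕜 = 1 := by rw [inner_self_eq_norm_sq_to_K, hy]; simp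
  by_cases hc : ⟪x, y⟫_𝕜 = 0
  · refine ⟨x, by rintro rfl; simp at hx, ?_⟩
    simp [inner_eq_zero_symm.mp hc, hc, hx]
  · set c := ⟪x, y⟫_𝕜 with hc_def
    set z := (‖c‖ : 𝕜) • x + starRingEnd 𝕜 c • y
    have hxz : ⟪x, z⟫_𝕜 = ((1 + ‖c‖ : ℝ) : 𝕜) * ‖c‖ := by
      simp only [z, inner_add_right, inner_smul_right, hxx, ← hc_def, RCLike.conj_mul]
      push_cast; ring
    have hyz : ⟪y, z⟫_𝕜 = ((1 + ‖c‖ : ℝ) : 𝕜) * starRingEnd 𝕜 c := by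
      simp only [z, inner_add_right, inner_smul_right, hyy, c, inner_conj_symm]
      push_cast; ring
    refine ⟨z, fun h0 => ?_, ?_⟩
    · have hr : (1 + ‖c‖) * ‖c‖ ≠ 0 := mul_ne_zero (by positivity) (norm_ne_zero_iff.mpr hc)
      rw [h0, inner_zero_right, ← ofReal_mul, eq_comm, ofReal_eq_zero] at hxz
      exact hr hxz
    · rw [_root_.add_apply, rankOne_apply, rankOne_apply, hxz, hyz, smul_add, mul_smul, mul_smul]

end RankOnePair

section

variable {𝕜 n : Type*} [RCLike 𝕜] [Fintype n]

theorem Matrix.toEuclideanCLM_vecMulVec [DecidableEq n] (x y : n → 𝕜) :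
    toEuclideanCLM (n := n) (𝕜 := 𝕜) (vecMulVec x (star y)) =
      rankOne 𝕜 (toLp 2 x) (toLp 2 y) := by
  ext z i
  simp [ofLp_toEuclideanCLM, vecMulVec_mulVec, EuclideanSpace.inner_eq_star_dotProduct,
    dotProduct_comm, mul_comm]

theorem Matrix.trace_vecMulVec_mul_vecMulVec (v u : n → 𝕜) :
    trace (vecMulVec v (star v) * vecMulVec u (star u)) = (‖star v ⬝ᵥ u‖ ^ 2 : ℝ) := by
  rw [vecMulVec_mul_vecMulVec, trace_vecMulVec, dotProduct_smul, smul_eq_mul, dotProduct_star,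
    dotProduct_comm u]
  exact (RCLike.mul_conj _).trans (ofReal_pow _ _).symm

theorem EuclideanSpace.norm_toLp_eq_one {v : n → 𝕜} (hv : star v ⬝ᵥ v = 1) :
    ‖toLp 2 v‖ = 1 := by
  have h : ((‖toLp 2 v‖ ^ 2 : ℝ) : 𝕜) = 1 := by
    rw [ofReal_pow, ← inner_self_eq_norm_sq_to_K, EuclideanSpace.inner_toLp_toLp, dotProduct_comm,
      hv]
  exact (pow_eq_one_iff_of_nonneg (norm_nonneg _) two_ne_zero).mp (by exact_mod_cast h)

end

/-- for rank-1 projectors `A = |ψ⟩⟨ψ|`, `B = |φ⟩⟨φ|` built from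
unit vectors, `‖Q(A⊗B)‖ = 2(1 + |⟨ψ|φ⟩|² + |⟨ψ|φ⟩|)`. -/
theorem stmt_14 (d : ℕ) (v u : Fin d → ℂ)
    (hv : star v ⬝ᵥ v = 1) (hu : star u ⬝ᵥ u = 1) :
    ‖((Matrix.vecMulVec v (star v)).trace * (Matrix.vecMulVec u (star u)).trace) •
          (1 : Matrix (Fin d) (Fin d) ℂ) +
        (Matrix.vecMulVec v (star v) * Matrix.vecMulVec u (star u)).trace •
          (1 : Matrix (Fin d) (Fin d) ℂ) +
        (Matrix.vecMulVec u (star u)).trace • Matrix.vecMulVec v (star v) +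
        (Matrix.vecMulVec v (star v)).trace • Matrix.vecMulVec u (star u) +
        Matrix.vecMulVec v (star v) * Matrix.vecMulVec u (star u) +
        Matrix.vecMulVec u (star u) * Matrix.vecMulVec v (star v)‖ =
      2 * (1 + ‖star v ⬝ᵥ u‖ ^ 2 + ‖star v ⬝ᵥ u‖) := by
  have trA : (vecMulVec v (star v)).trace = 1 := by rw [trace_vecMulVec, dotProduct_comm, hv]
  have trB : (vecMulVec u (star u)).trace = 1 := by rw [trace_vecMulVec, dotProduct_comm, hu]
  rw [cstar_norm_def]
  simp only [map_add, map_smul, map_mul, map_one, toEuclideanCLM_vecMulVec, trA, trB,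
    trace_vecMulVec_mul_vecMulVec]
  set x : EuclideanSpace ℂ (Fin d) := toLp 2 v
  set y : EuclideanSpace ℂ (Fin d) := toLp 2 u
  have hx : ‖x‖ = 1 := EuclideanSpace.norm_toLp_eq_one hv
  have hy : ‖y‖ = 1 := EuclideanSpace.norm_toLp_eq_one hu
  have hxy : star v ⬝ᵥ u = ⟪x, y⟫_ℂ := dotProduct_comm _ _
  obtain ⟨z, hz, hPz⟩ := exists_rankOne_add_rankOne_apply_eq_smul (𝕜 := ℂ) hx hy
  rw [hxy]
  convert ContinuousLinearMap.norm_smul_one_add_mul_self_eq (c := 1 + ‖⟪x, y⟫_ℂ‖ ^ 2)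
    (by positivity) (norm_rankOne_add_rankOne_le hx hy) hz hPz using 2
  · rw [add_mul, mul_add, mul_add, (isIdempotentElem_rankOne_self hx).eq,
      (isIdempotentElem_rankOne_self hy).eq]
    push_cast
    module
  · ring
end

section
/- Let A be a projector of rank r on a d-dimensional Hilbert space and let B be a nonzero rank-1 positive operator with either AB = B or AB = 0. With Q(A⊗B) := tr(A)tr(B)·1 + tr(AB)·1 + tr(B)·A + tr(A)·B + AB + BA, the operator norm satisfies ‖Q(A⊗B)‖ = 2(r+2)·tr(B) if AB = B, and ‖Q(A⊗B)‖ = 2r·tr(B) if AB = 0. Consequently, for any rank-1 POVM 𝒝 = {B_k} all of whose elements satisfy A·B_k = B_k or A·B_k = 0, one has Σ_k ‖Q(A⊗B_k)‖ = 2(d+2)·tr(A). -/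
/-! Write the rank-one positive `B` as `t • P` with `t = tr B` and `P` a star projection of
trace one. Then `Q(A⊗B)` is a nonnegative combination of `1`, `A` and `P`, and `Q(A⊗B) * P`
is `2(r+2)t • P` (if `AP = P`) or `2rt • P` (if `AP = 0`). The Loewner bounds `A, P ≤ 1`,
resp. `A + P ≤ 1`, show that `Q(A⊗B)` lies below that same multiple of `1`, so the multiple is
its norm. In both cases `‖Q(A⊗B)‖ = 2r tr B + 4 tr(AB)`, which is additive in `B`, and summing
over the POVM gives `2rd + 4r`. -/

open scoped ComplexOrder Matrix.Norms.L2Operator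

/-- The operator `Q(A⊗B) = tr(A)tr(B)·1 + tr(AB)·1 + tr(B)·A + tr(A)·B + AB + BA`. -/
noncomputable def Qop (d : ℕ) (A B : Matrix (Fin d) (Fin d) ℂ) :
    Matrix (Fin d) (Fin d) ℂ :=
  (A.trace * B.trace) • (1 : Matrix (Fin d) (Fin d) ℂ) +
    (A * B).trace • (1 : Matrix (Fin d) (Fin d) ℂ) +
    B.trace • A + A.trace • B + A * B + B * A

open Module LinearMap in
theorem LinearMap.mul_self_eq_trace_smul_of_finrank_range_eq_one {K V : Type*} [Field K]
    [AddCommGroup V] [Module K V] [FiniteDimensional K V] {f : V →ₗ[K] V}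
    (h : finrank K (range f) = 1) : f * f = trace K V f • f := by
  obtain ⟨c, hc, -⟩ := existsUnique_eq_smul_id_of_finrank_eq_one h
    (f.restrict (p := range f) fun x _ => mem_range_self f x)
  have htrace : trace K V f = c := by
    rw [← trace_restrict_eq_of_forall_mem (range f) f (mem_range_self f), hc, map_smul,
      trace_id, h, Nat.cast_one, smul_eq_mul, mul_one]
  ext1 x
  simpa [htrace] using congr(($hc ⟨f x, mem_range_self f x⟩ : V))

theorem Matrix.trace_eq_rank_of_isIdempotentElem {K n : Type*} [Field K] [Fintype n]
    [DecidableEq n] {A : Matrix n n K} (hA : IsIdempotentElem A) : A.trace = A.rank := by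
  rw [← trace_toLin'_eq]
  exact (LinearMap.IsIdempotentElem.isProj_range _ (hA.map toLinAlgEquiv')).trace

theorem Matrix.mul_self_eq_trace_smul_of_rank_eq_one {K n : Type*} [Field K] [Fintype n]
    [DecidableEq n] {B : Matrix n n K} (hB : B.rank = 1) : B * B = B.trace • B := by
  apply toLinAlgEquiv'.injective
  rw [map_mul, map_smul, ← trace_toLin'_eq]
  exact LinearMap.mul_self_eq_trace_smul_of_finrank_range_eq_one hB

theorem Matrix.PosSemidef.exists_isStarProjection_of_rank_eq_one {n : Type*} [Fintype n]
    [DecidableEq n] {B : Matrix n n ℂ} (hB : B.PosSemidef) (h1 : B.rank = 1) :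
    ∃ P : Matrix n n ℂ,
      IsStarProjection P ∧ P.trace = 1 ∧ 0 < B.trace.re ∧ B = B.trace.re • P := by
  have hB0 : B ≠ 0 := by rintro rfl; simp at h1
  set t := B.trace.re
  have htr : B.trace = t := Complex.eq_re_of_ofReal_le (r := 0) (by simpa using hB.trace_nonneg)
  have ht : 0 < t := by
    have := lt_of_le_of_ne hB.trace_nonneg (Ne.symm (mt hB.trace_eq_zero_iff.mp hB0))
    rwa [htr, Complex.zero_lt_real] at this
  have hBB : B * B = t • B := by
    rw [Matrix.mul_self_eq_trace_smul_of_rank_eq_one h1, htr, Complex.coe_smul]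
  refine ⟨t⁻¹ • B, ⟨?_, ?_⟩, ?_, ht, ?_⟩
  · rw [IsIdempotentElem, smul_mul_smul_comm, hBB, smul_smul, mul_assoc, inv_mul_cancel₀ ht.ne',
      mul_one]
  · exact (IsSelfAdjoint.all t⁻¹).smul hB.isHermitian.isSelfAdjoint
  · rw [trace_smul, htr, Complex.real_smul, ← Complex.ofReal_mul, inv_mul_cancel₀ ht.ne',
      Complex.ofReal_one]
  · rw [smul_smul, mul_inv_cancel₀ ht.ne', one_smul]

theorem CStarAlgebra.norm_eq_of_le_algebraMap_of_mul_eq_smul {A : Type*} [CStarAlgebra A]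
    [PartialOrder A] [StarOrderedRing A] {a b : A} {c : ℝ} (hc : 0 ≤ c) (ha : 0 ≤ a)
    (hac : a ≤ algebraMap ℝ A c) (hb : b ≠ 0) (hab : a * b = c • b) : ‖a‖ = c := by
  refine le_antisymm ((norm_le_iff_le_algebraMap a hc ha).mpr hac) ?_
  have : c * ‖b‖ ≤ ‖a‖ * ‖b‖ := by
    calc c * ‖b‖ = ‖a * b‖ := by rw [hab, norm_smul, Real.norm_of_nonneg hc]
      _ ≤ ‖a‖ * ‖b‖ := norm_mul_le a b
  exact le_of_mul_le_mul_right this (norm_pos_iff.mpr hb)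

section Qop

open scoped MatrixOrder

variable {d r : ℕ} {A P : Matrix (Fin d) (Fin d) ℂ} {t : ℝ}

theorem Qop_smul_of_mul_eq_self (hA : IsStarProjection A) (hAr : A.trace = r)
    (hP : IsStarProjection P) (hP1 : P.trace = 1) (hAP : A * P = P) :
    Qop d A (t • P) = algebraMap ℝ _ ((r + 1) * t) + t • A + ((r + 2) * t) • P := by
  have hPA : P * A = P := by
    simpa [hA.isSelfAdjoint.star_eq, hP.isSelfAdjoint.star_eq] using congr(star $hAP)
  simp only [Qop, Matrix.trace_smul, mul_smul_comm, smul_mul_assoc, hAP, hPA, hAr, hP1,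
    Algebra.algebraMap_eq_smul_one, ← Complex.coe_smul]
  push_cast
  module

theorem Qop_smul_of_mul_eq_zero (hA : IsStarProjection A) (hAr : A.trace = r)
    (hP : IsStarProjection P) (hP1 : P.trace = 1) (hAP : A * P = 0) :
    Qop d A (t • P) = algebraMap ℝ _ (r * t) + t • A + (r * t) • P := by
  have hPA : P * A = 0 := by
    simpa [hA.isSelfAdjoint.star_eq, hP.isSelfAdjoint.star_eq] using congr(star $hAP)
  simp only [Qop, Matrix.trace_smul, mul_smul_comm, smul_mul_assoc, hAP, hPA, hAr, hP1,
    Algebra.algebraMap_eq_smul_one, ← Complex.coe_smul, Matrix.trace_zero]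
  push_cast
  module

theorem norm_Qop_smul_of_mul_eq_self (hA : IsStarProjection A) (hAr : A.trace = r)
    (hP : IsStarProjection P) (hP1 : P.trace = 1) (hAP : A * P = P) (ht : 0 ≤ t) :
    ‖Qop d A (t • P)‖ = 2 * (r + 2) * t := by
  rw [Qop_smul_of_mul_eq_self hA hAr hP hP1 hAP]
  apply CStarAlgebra.norm_eq_of_le_algebraMap_of_mul_eq_smul (b := P) (by positivity)
  · exact add_nonneg (add_nonneg (algebraMap_nonneg _ (by positivity))
      (smul_nonneg ht hA.nonneg)) (smul_nonneg (by positivity) hP.nonneg)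
  · calc _ ≤ algebraMap ℝ _ ((r + 1) * t) + t • (1 : Matrix (Fin d) (Fin d) ℂ)
            + ((r + 2) * t) • 1 := by
          gcongr
          · exact hA.le_one
          · exact hP.le_one
      _ = _ := by simp only [Algebra.algebraMap_eq_smul_one]; module
  · rintro rfl; simp at hP1
  · simp only [add_mul, smul_mul_assoc, hAP, hP.isIdempotentElem.eq,
      Algebra.algebraMap_eq_smul_one, one_mul]
    module

theorem norm_Qop_smul_of_mul_eq_zero (hA : IsStarProjection A) (hAr : A.trace = r)
    (hP : IsStarProjection P) (hP1 : P.trace = 1) (hAP : A * P = 0) (ht : 0 ≤ t) :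
    ‖Qop d A (t • P)‖ = 2 * r * t := by
  rw [Qop_smul_of_mul_eq_zero hA hAr hP hP1 hAP]
  have htA : t • A ≤ (r * t) • A := by
    rcases Nat.eq_zero_or_pos r with rfl | hr
    · have hA0 : A = 0 :=
        (Matrix.nonneg_iff_posSemidef.mp hA.nonneg).trace_eq_zero_iff.mp (by simpa using hAr)
      simp [hA0]
    · exact smul_le_smul_of_nonneg_right (le_mul_of_one_le_left ht (by exact_mod_cast hr))
        hA.nonneg
  apply CStarAlgebra.norm_eq_of_le_algebraMap_of_mul_eq_smul (b := P) (by positivity)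
  · exact add_nonneg (add_nonneg (algebraMap_nonneg _ (by positivity))
      (smul_nonneg ht hA.nonneg)) (smul_nonneg (by positivity) hP.nonneg)
  · calc _ ≤ algebraMap ℝ _ (r * t) + (r * t) • (A + P) := by
          rw [smul_add, ← add_assoc]; gcongr
      _ ≤ algebraMap ℝ _ (r * t) + (r * t) • 1 := by
          gcongr
          exact (hA.add hP hAP).le_one
      _ = _ := by simp only [Algebra.algebraMap_eq_smul_one]; module
  · rintro rfl; simp at hP1
  · simp only [add_mul, smul_mul_assoc, hAP, hP.isIdempotentElem.eq,
      Algebra.algebraMap_eq_smul_one, one_mul]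
    module

theorem norm_Qop_of_rank_eq_one {B : Matrix (Fin d) (Fin d) ℂ} (hA : IsStarProjection A)
    (hAr : A.trace = r) (hB : B.PosSemidef) (hB1 : B.rank = 1) (hAB : A * B = B ∨ A * B = 0) :
    ‖Qop d A B‖ = 2 * r * B.trace.re + 4 * (A * B).trace.re := by
  obtain ⟨P, hP, hP1, ht, hBP⟩ := hB.exists_isStarProjection_of_rank_eq_one hB1
  set t := B.trace.re
  rw [hBP, mul_smul_comm]
  rcases hAB with hAB | hAB
  · have hAP : A * P = P := by
      rw [hBP, mul_smul_comm] at hAB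
      exact smul_right_injective _ ht.ne' hAB
    rw [norm_Qop_smul_of_mul_eq_self hA hAr hP hP1 hAP ht.le, hAP, Matrix.trace_smul, hP1]
    simp only [Complex.real_smul, mul_one, Complex.ofReal_re]
    ring
  · have hAP : A * P = 0 := by
      rw [hBP, mul_smul_comm] at hAB
      exact (smul_eq_zero.mp hAB).resolve_left ht.ne'
    rw [norm_Qop_smul_of_mul_eq_zero hA hAr hP hP1 hAP ht.le, hAP]
    simp

end Qop

/-- norms `‖Q(A⊗B)‖` for a rank-r projector A and rank-1 B with
`AB = B` or `AB = 0`, and the summation identity `Σ_k ‖Q(A⊗B_k)‖ = 2(d+2)tr(A)`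
for a rank-1 POVM commuting with A elementwise in this way. -/
theorem stmt_18 (d r : ℕ) (A : Matrix (Fin d) (Fin d) ℂ)
    (hproj : A * A = A) (hherm : A.IsHermitian) (hr : A.rank = r) :
    (∀ B : Matrix (Fin d) (Fin d) ℂ, B.PosSemidef → B ≠ 0 → B.rank = 1 →
      (A * B = B → ‖Qop d A B‖ = 2 * ((r : ℝ) + 2) * B.trace.re) ∧
      (A * B = 0 → ‖Qop d A B‖ = 2 * (r : ℝ) * B.trace.re)) ∧
    (∀ (n : ℕ) (B : Fin n → Matrix (Fin d) (Fin d) ℂ),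
      (∀ k, (B k).PosSemidef) → (∀ k, (B k).rank = 1) → (∑ k, B k = 1) →
      (∀ k, A * B k = B k ∨ A * B k = 0) →
      ∑ k, ‖Qop d A (B k)‖ = 2 * ((d : ℝ) + 2) * A.trace.re) := by
  have hA : IsStarProjection A := ⟨hproj, hherm⟩
  have hAr : A.trace = r := hr ▸ Matrix.trace_eq_rank_of_isIdempotentElem hproj
  refine ⟨fun B hB _ hB1 => ⟨fun hAB => ?_, fun hAB => ?_⟩, fun n B hB hB1 hsum hAB => ?_⟩
  · rw [norm_Qop_of_rank_eq_one hA hAr hB hB1 (.inl hAB), hAB]; ring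
  · rw [norm_Qop_of_rank_eq_one hA hAr hB hB1 (.inr hAB), hAB]; simp
  · simp_rw [norm_Qop_of_rank_eq_one hA hAr (hB _) (hB1 _) (hAB _), Finset.sum_add_distrib,
      ← Finset.mul_sum, ← Complex.re_sum, ← Matrix.trace_sum, ← Finset.mul_sum, hsum,
      mul_one, hAr]
    simp only [Matrix.trace_one, Fintype.card_fin, Complex.natCast_re]
    ring
end
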